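/- arXiv:0801.1176 — 9 statements merged into one kernel-verified Lean document; each statement's English description precedes it below -/
import Mathlib

section
/- Let N(ζ) be the 2×2 matrix over R with rows (d, ζ·d·a) and (ζ·d⁻¹·a*, d⁻¹·(1−ζ²d²)). Then L°_A(ζ)·N(ζ) = (1−ζ²)·I₂ = N(ζ)·L°_A(ζ). In particular, when 1−ζ² is invertible in K, L°_A(ζ) is invertible with inverse (1−ζ²)⁻¹·N(ζ). -/
noncomputable section

open Matrix

/-- For a `q`-oscillator triple `(a, a*, d)` in a unital associative `K`-algebra `R`
(`d` invertible, `d·a = q⁻¹·a·d`, `d·a* = q·a*·d`, `a·a* = 1 − q²d²`, `a*·a = 1 − d²`),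
and the oscillator L-operator `L°_A(ζ)` with rows `((1 − q²ζ²d²)·d⁻¹, −ζ·a·d)` and
`(−ζ·a*·d⁻¹, d)`, the matrix `N(ζ)` with rows `(d, ζ·d·a)` and `(ζ·d⁻¹·a*, d⁻¹·(1−ζ²d²))`
satisfies `L°_A(ζ)·N(ζ) = (1−ζ²)·I₂ = N(ζ)·L°_A(ζ)`; in particular when `1−ζ²` is
invertible in `K`, `L°_A(ζ)` is invertible with inverse `(1−ζ²)⁻¹·N(ζ)`. -/
theorem oscillator_L_inverse {K : Type*} [Field K] {R : Type*} [Ring R] [Algebra K R]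
    (q : K) (hq : q ≠ 0)
    (a astar d dinv : R)
    (hd : d * dinv = 1) (hd' : dinv * d = 1)
    (hda : d * a = q⁻¹ • (a * d)) (hdas : d * astar = q • (astar * d))
    (haas : a * astar = 1 - q ^ 2 • d ^ 2) (hasa : astar * a = 1 - d ^ 2)
    (ζ : K) (hζ : ζ ≠ 0)
    (LA N : Matrix (Fin 2) (Fin 2) R)
    (hLA : LA = !![(1 - (q ^ 2 * ζ ^ 2) • d ^ 2) * dinv, -(ζ • (a * d));
                   -(ζ • (astar * dinv)), d])
    (hN : N = !![d, ζ • (d * a);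
                 ζ • (dinv * astar), dinv * (1 - ζ ^ 2 • d ^ 2)]) :
    LA * N = (1 - ζ ^ 2) • (1 : Matrix (Fin 2) (Fin 2) R) ∧
    N * LA = (1 - ζ ^ 2) • (1 : Matrix (Fin 2) (Fin 2) R) ∧
    (1 - ζ ^ 2 ≠ 0 →
      LA * ((1 - ζ ^ 2)⁻¹ • N) = 1 ∧ ((1 - ζ ^ 2)⁻¹ • N) * LA = 1) := by
  have h1 : d * (dinv * astar) = astar := by rw [← mul_assoc, hd, one_mul]
  have h2 : dinv * (d * a) = a := by rw [← mul_assoc, hd', one_mul]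
  have h3 : d * (dinv * d ^ 2) = d ^ 2 := by rw [← mul_assoc, hd, one_mul]
  have h4 : dinv * (d * astar) = astar := by rw [← mul_assoc, hd', one_mul]
  have h5 : d * (dinv * a) = a := by rw [← mul_assoc, hd, one_mul]
  have hda2 : d ^ 2 * a = (q ^ 2)⁻¹ • (a * d ^ 2) := by
    have h : d * (d * a) = (q⁻¹ * q⁻¹) • (a * (d * d)) := by
      rw [hda, mul_smul_comm, ← mul_assoc, hda, smul_mul_assoc, smul_smul, mul_assoc]
    simpa [pow_two, mul_inv, mul_assoc] using h
  have hdas2 : d ^ 2 * astar = q ^ 2 • (astar * d ^ 2) := by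
    have h : d * (d * astar) = (q * q) • (astar * (d * d)) := by
      rw [hdas, mul_smul_comm, ← mul_assoc, hdas, smul_mul_assoc, smul_smul, mul_assoc]
    simpa [pow_two, mul_assoc] using h
  have g1 : d ^ 2 * dinv = d := by rw [pow_two, mul_assoc, hd, mul_one]
  have g7 : d ^ 2 * d = d * d ^ 2 := by rw [pow_two, mul_assoc]
  have g8 : d * d = d ^ 2 := (pow_two d).symm
  have g2 : a * (astar * dinv) = dinv - q ^ 2 • d := by
    rw [← mul_assoc, haas, sub_mul, one_mul, smul_mul_assoc, g1]
  have g4 : d ^ 2 * (astar * dinv) = q ^ 2 • (astar * d) := by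
    rw [← mul_assoc, hdas2, smul_mul_assoc, mul_assoc, g1]
  have g5 : astar * (a * d) = d - d * d ^ 2 := by
    rw [← mul_assoc, hasa, sub_mul, one_mul, g7]
  have g6 : dinv * (d * d ^ 2) = d ^ 2 := by rw [← mul_assoc, hd', one_mul]
  have hda2' : d * (d * a) = (q ^ 2)⁻¹ • (a * d ^ 2) := by
    rw [← mul_assoc, ← pow_two, hda2]
  have key : LA * N = (1 - ζ ^ 2) • (1 : Matrix (Fin 2) (Fin 2) R) ∧
      N * LA = (1 - ζ ^ 2) • (1 : Matrix (Fin 2) (Fin 2) R) := by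
    subst hLA hN
    constructor <;>
    · ext i j
      fin_cases i <;> fin_cases j <;>
        simp [Matrix.mul_apply, Fin.sum_univ_two, Matrix.one_apply, smul_smul,
          mul_smul_comm, smul_mul_assoc, mul_sub, sub_mul, mul_assoc,
          hd, hd', h1, h2, h3, h4, h5, hda2, hdas2, haas, hasa,
          g1, g2, g4, g5, g6, g7, g8, hda2'] <;>
        match_scalars <;> field_simp <;> ring
  refine ⟨key.1, key.2, fun hne => ⟨?_, ?_⟩⟩
  · rw [mul_smul_comm, key.1, smul_smul, inv_mul_cancel₀ hne, one_smul]
  · rw [smul_mul_assoc, key.2, smul_smul, inv_mul_cancel₀ hne, one_smul]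
end
end

section
/- Crossing symmetry of the oscillator L-operator: let ε = [[0,−1],[1,0]] and let (L°_A(ζ))^t denote the transpose of the 2×2 matrix L°_A(ζ) over R. Then for every nonzero ζ ∈ K, (ε·(L°_A(ζ))^t·ε⁻¹)·L°_A(qζ) = (1−q²ζ²)·I₂ = L°_A(qζ)·(ε·(L°_A(ζ))^t·ε⁻¹). -/
noncomputable section

open Matrix

/-- Crossing symmetry of the oscillator L-operator: for a `q`-oscillator triple
`(a, a*, d)` in a unital associative `K`-algebra `R` and
`L°_A(ζ) = [[ (1 − q²ζ²d²)·d⁻¹, −ζ·a·d ], [ −ζ·a*·d⁻¹, d ]]`, with `ε = [[0,−1],[1,0]]`,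
one has `(ε·(L°_A(ζ))ᵗ·ε⁻¹)·L°_A(qζ) = (1−q²ζ²)·I₂ = L°_A(qζ)·(ε·(L°_A(ζ))ᵗ·ε⁻¹)`. -/
theorem oscillator_L_crossing {K : Type*} [Field K] {R : Type*} [Ring R] [Algebra K R]
    (q : K) (hq : q ≠ 0)
    (a astar d dinv : R)
    (hd : d * dinv = 1) (hd' : dinv * d = 1)
    (hda : d * a = q⁻¹ • (a * d)) (hdas : d * astar = q • (astar * d))
    (haas : a * astar = 1 - q ^ 2 • d ^ 2) (hasa : astar * a = 1 - d ^ 2)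
    (ζ : K) (hζ : ζ ≠ 0)
    (LA : K → Matrix (Fin 2) (Fin 2) R)
    (hLA : ∀ η : K, LA η = !![(1 - (q ^ 2 * η ^ 2) • d ^ 2) * dinv, -(η • (a * d));
                              -(η • (astar * dinv)), d])
    (eps epsInv : Matrix (Fin 2) (Fin 2) R)
    (heps : eps = !![0, -1; 1, 0]) (hepsInv : epsInv = !![0, 1; -1, 0]) :
    (eps * (LA ζ)ᵀ * epsInv) * LA (q * ζ)
        = (1 - q ^ 2 * ζ ^ 2) • (1 : Matrix (Fin 2) (Fin 2) R) ∧
    LA (q * ζ) * (eps * (LA ζ)ᵀ * epsInv)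
        = (1 - q ^ 2 * ζ ^ 2) • (1 : Matrix (Fin 2) (Fin 2) R) := by
  -- cancellation helpers
  have hdl : ∀ x : R, dinv * (d * x) = x := fun x => by rw [← mul_assoc, hd', one_mul]
  have hdr : ∀ x : R, d * (dinv * x) = x := fun x => by rw [← mul_assoc, hd, one_mul]
  -- basic commutation consequences
  have had : a * d = q • (d * a) := by
    rw [hda, smul_smul, mul_inv_cancel₀ hq, one_smul]
  have hdinva : dinv * a = q • (a * dinv) := by
    have h := congrArg (fun x => dinv * x * dinv) had
    simpa [mul_assoc, hdl, hdr, hd, hd', mul_smul_comm, smul_mul_assoc, mul_one] using h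
  have hdinvas : dinv * astar = q⁻¹ • (astar * dinv) := by
    have h := congrArg (fun x => dinv * x * dinv) hdas
    have h2 : astar * dinv = q • (dinv * astar) := by
      simpa [mul_assoc, hdl, hdr, hd, hd', mul_smul_comm, smul_mul_assoc, mul_one] using h
    rw [h2, smul_smul, inv_mul_cancel₀ hq, one_smul]
  -- continuation forms of the rewrite rules
  have hca : ∀ x : R, d * (a * x) = q⁻¹ • (a * (d * x)) := fun x => by
    rw [← mul_assoc, hda, smul_mul_assoc, mul_assoc]
  have hcas : ∀ x : R, d * (astar * x) = q • (astar * (d * x)) := fun x => by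
    rw [← mul_assoc, hdas, smul_mul_assoc, mul_assoc]
  have hia : ∀ x : R, dinv * (a * x) = q • (a * (dinv * x)) := fun x => by
    rw [← mul_assoc, hdinva, smul_mul_assoc, mul_assoc]
  have hias : ∀ x : R, dinv * (astar * x) = q⁻¹ • (astar * (dinv * x)) := fun x => by
    rw [← mul_assoc, hdinvas, smul_mul_assoc, mul_assoc]
  have hc1 : ∀ x : R, a * (astar * x) = x - q ^ 2 • (d * (d * x)) := fun x => by
    rw [← mul_assoc, haas, sub_mul, one_mul, smul_mul_assoc]; simp [pow_two, mul_assoc]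
  have hc2 : ∀ x : R, astar * (a * x) = x - d * (d * x) := fun x => by
    rw [← mul_assoc, hasa, sub_mul, one_mul]; simp [pow_two, mul_assoc]
  -- the conjugated matrix
  have hM : eps * (LA ζ)ᵀ * epsInv
      = !![d, ζ • (a * d); ζ • (astar * dinv), (1 - (q ^ 2 * ζ ^ 2) • d ^ 2) * dinv] := by
    have ht : (LA ζ)ᵀ = !![(1 - (q ^ 2 * ζ ^ 2) • d ^ 2) * dinv, -(ζ • (astar * dinv));
                           -(ζ • (a * d)), d] := by
      rw [hLA]; ext i j; fin_cases i <;> fin_cases j <;> rfl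
    rw [ht, heps, hepsInv, Matrix.mul_fin_two, Matrix.mul_fin_two]
    norm_num
  constructor <;>
  · rw [hM, hLA, Matrix.mul_fin_two]
    ext i j
    fin_cases i <;> fin_cases j <;> simp [Matrix.one_apply] <;>
    · simp only [pow_two, sub_mul, mul_sub, smul_sub, one_mul, mul_one, mul_assoc,
        smul_mul_assoc, mul_smul_comm, smul_smul,
        hca, hcas, hia, hias, hc1, hc2, hdl, hdr, hd, hd', hda, hdas, hdinva, hdinvas, haas, hasa]
      match_scalars <;> field_simp <;> ring
end
end

section
/- The following identities hold in R for every nonzero ζ ∈ K: (i) Y(ζ)·U(ζ) = q²·U(ζ)·Y(ζ); (ii) Z(ζ)·U(ζ) = q⁻²·U(ζ)·Z(ζ); (iii) a_A·U(ζ) − q²·U(ζ)·a_A = ζ(1−q²)·1; (iv) Y(ζ)·a_A = q⁻²·a_A·Y(ζ); (v) Z(ζ)·a_A = q²·a_A·Z(ζ) + q²(1−q²)ζ⁻¹·V(ζ); (vi) Y(ζ)·Z(ζ) = q²·1 − ζ⁻¹q⁴·U(ζ)·V(ζ); (vii) Z(ζ)·Y(ζ) = q²·1 − ζ⁻¹q²·U(ζ)·V(ζ).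 -/
noncomputable section

/-- Commutation relations among `U(ζ)`, `V(ζ)`, `Y(ζ)`, `Z(ζ)` and `a_A`, for two
mutually commuting `q`-oscillator triples `(a_A, a*_A, d_A)`, `(a_B, a*_B, d_B)` in a
unital associative `K`-algebra `R`, where `U(ζ) = ζ·a*_A + a_B·d_A²`,
`V(ζ) = ζ·a*_B + a_A·d_B²`, `Y(ζ) = (ζq² − a_A·a_B)·d_A²`,
`Z(ζ) = ζ⁻¹q²·d_B² − a*_A·a*_B·d_A⁻²`. -/
theorem UVYZ_relations_I {K : Type*} [Field K] {R : Type*} [Ring R] [Algebra K R]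
    (q : K) (hq : q ≠ 0)
    (aA aAs dA dAi aB aBs dB dBi : R)
    (hdA : dA * dAi = 1) (hdA' : dAi * dA = 1)
    (hdB : dB * dBi = 1) (hdB' : dBi * dB = 1)
    (hA1 : dA * aA = q⁻¹ • (aA * dA)) (hA2 : dA * aAs = q • (aAs * dA))
    (hA3 : aA * aAs = 1 - q ^ 2 • dA ^ 2) (hA4 : aAs * aA = 1 - dA ^ 2)
    (hB1 : dB * aB = q⁻¹ • (aB * dB)) (hB2 : dB * aBs = q • (aBs * dB))
    (hB3 : aB * aBs = 1 - q ^ 2 • dB ^ 2) (hB4 : aBs * aB = 1 - dB ^ 2)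
    (hc : ∀ x ∈ ({aA, aAs, dA, dAi} : Set R), ∀ y ∈ ({aB, aBs, dB, dBi} : Set R),
      Commute x y)
    (ζ : K) (hζ : ζ ≠ 0)
    (U V Y Z : R)
    (hU : U = ζ • aAs + aB * dA ^ 2)
    (hV : V = ζ • aBs + aA * dB ^ 2)
    (hY : Y = (ζ * q ^ 2) • dA ^ 2 - aA * aB * dA ^ 2)
    (hZ : Z = (ζ⁻¹ * q ^ 2) • dB ^ 2 - aAs * aBs * dAi ^ 2) :
    Y * U = q ^ 2 • (U * Y) ∧
    Z * U = (q ^ 2)⁻¹ • (U * Z) ∧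
    aA * U - q ^ 2 • (U * aA) = (ζ * (1 - q ^ 2)) • (1 : R) ∧
    Y * aA = (q ^ 2)⁻¹ • (aA * Y) ∧
    Z * aA = q ^ 2 • (aA * Z) + (q ^ 2 * (1 - q ^ 2) * ζ⁻¹) • V ∧
    Y * Z = q ^ 2 • (1 : R) - (ζ⁻¹ * q ^ 4) • (U * V) ∧
    Z * Y = q ^ 2 • (1 : R) - (ζ⁻¹ * q ^ 2) • (U * V) := by
  -- generic helpers
  have swap : ∀ (x y : R) (c : K), y * x = c • (x * y) →
      ∀ t : R, y * (x * t) = c • (x * (y * t)) := by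
    intro x y c h t
    rw [← mul_assoc, h, smul_mul_assoc, mul_assoc]
  have red : ∀ (x y w : R), x * y = w → ∀ t : R, x * (y * t) = w * t := by
    intro x y w h t
    rw [← mul_assoc, h]
  have cmm : ∀ (x y : R), x * y = y * x → ∀ t : R, y * (x * t) = x * (y * t) := by
    intro x y h t
    rw [← mul_assoc, ← h, mul_assoc]
  have conj : ∀ (x d di : R) (c : K), c ≠ 0 → d * di = 1 → di * d = 1 →
      d * x = c • (x * d) → di * x = c⁻¹ • (x * di) := by
    intro x d di c hc0 hd hd' h
    have hx : x * d = c⁻¹ • (d * x) := by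
      rw [h, smul_smul, inv_mul_cancel₀ hc0, one_smul]
    calc di * x = di * (x * (d * di)) := by rw [hd, mul_one]
      _ = di * ((x * d) * di) := by rw [mul_assoc x d di]
      _ = di * ((c⁻¹ • (d * x)) * di) := by rw [hx]
      _ = c⁻¹ • ((di * d) * (x * di)) := by
          rw [smul_mul_assoc, mul_smul_comm, mul_assoc, mul_assoc]
      _ = c⁻¹ • (x * di) := by rw [hd', one_mul]
  -- inverse-conjugated relations
  have hAi1 : dAi * aA = q⁻¹⁻¹ • (aA * dAi) :=
    conj aA dA dAi q⁻¹ (inv_ne_zero hq) hdA hdA' hA1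
  have hAi2 : dAi * aAs = q⁻¹ • (aAs * dAi) :=
    conj aAs dA dAi q hq hdA hdA' hA2
  have hBi1 : dBi * aB = q⁻¹⁻¹ • (aB * dBi) :=
    conj aB dB dBi q⁻¹ (inv_ne_zero hq) hdB hdB' hB1
  have hBi2 : dBi * aBs = q⁻¹ • (aBs * dBi) :=
    conj aBs dB dBi q hq hdB hdB' hB2
  -- commuting pairs (oriented: B-family moved right of A-family, a's left of d's)
  have mA : ∀ x ∈ ({aA, aAs, dA, dAi} : Set R), True := fun _ _ => trivial
  have cab : ∀ x ∈ ({aA, aAs, dA, dAi} : Set R), ∀ y ∈ ({aB, aBs, dB, dBi} : Set R),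
      x * y = y * x := fun x hx y hy => (hc x hx y hy).eq
  have e1 : aA * aB = aB * aA := cab aA (by simp) aB (by simp)
  have e2 : aA * aBs = aBs * aA := cab aA (by simp) aBs (by simp)
  have e3 : aA * dB = dB * aA := cab aA (by simp) dB (by simp)
  have e4 : aA * dBi = dBi * aA := cab aA (by simp) dBi (by simp)
  have e5 : aAs * aB = aB * aAs := cab aAs (by simp) aB (by simp)
  have e6 : aAs * aBs = aBs * aAs := cab aAs (by simp) aBs (by simp)
  have e7 : aAs * dB = dB * aAs := cab aAs (by simp) dB (by simp)
  have e8 : aAs * dBi = dBi * aAs := cab aAs (by simp) dBi (by simp)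
  have e9 : dA * aB = aB * dA := cab dA (by simp) aB (by simp)
  have e10 : dA * aBs = aBs * dA := cab dA (by simp) aBs (by simp)
  have e11 : dA * dB = dB * dA := cab dA (by simp) dB (by simp)
  have e12 : dA * dBi = dBi * dA := cab dA (by simp) dBi (by simp)
  have e13 : dAi * aB = aB * dAi := cab dAi (by simp) aB (by simp)
  have e14 : dAi * aBs = aBs * dAi := cab dAi (by simp) aBs (by simp)
  have e15 : dAi * dB = dB * dAi := cab dAi (by simp) dB (by simp)
  have e16 : dAi * dBi = dBi * dAi := cab dAi (by simp) dBi (by simp)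
  clear cab mA hc
  refine ⟨?_, ?_, ?_, ?_, ?_, ?_, ?_⟩ <;>
  · simp only [hU, hV, hY, hZ, pow_two, mul_add, add_mul, mul_sub, sub_mul,
      mul_one, one_mul, smul_mul_assoc, mul_smul_comm, smul_smul, mul_assoc,
      smul_sub, smul_add,
      -- base reorderings
      hA1, hA2, hB1, hB2, hAi1, hAi2, hBi1, hBi2,
      e1.symm, e2.symm, e3.symm, e4.symm, e5.symm, e6.symm, e7.symm, e8.symm,
      e9, e10, e11.symm, e12.symm, e13, e14, e15.symm, e16.symm,
      hA3, hA4, hB3, hB4, hdA, hdA', hdB, hdB',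
      -- tail versions
      swap aA dA q⁻¹ hA1, swap aAs dA q hA2, swap aB dB q⁻¹ hB1, swap aBs dB q hB2,
      swap aA dAi q⁻¹⁻¹ hAi1, swap aAs dAi q⁻¹ hAi2,
      swap aB dBi q⁻¹⁻¹ hBi1, swap aBs dBi q⁻¹ hBi2,
      cmm aA aB e1, cmm aA aBs e2, cmm aA dB e3, cmm aA dBi e4,
      cmm aAs aB e5, cmm aAs aBs e6, cmm aAs dB e7, cmm aAs dBi e8,
      cmm aB dA e9.symm, cmm aBs dA e10.symm, cmm dA dB e11, cmm dA dBi e12,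
      cmm aB dAi e13.symm, cmm aBs dAi e14.symm, cmm dAi dB e15, cmm dAi dBi e16,
      red aA aAs _ hA3, red aAs aA _ hA4, red aB aBs _ hB3, red aBs aB _ hB4,
      red dA dAi 1 hdA, red dAi dA 1 hdA', red dB dBi 1 hdB, red dBi dB 1 hdB']
    match_scalars <;> field_simp <;> ring
end
end

section
/- The following identities hold in R for every nonzero ζ ∈ K: (i) V(ζ) commutes with each of U(ζ), Y(ζ), Z(ζ) and a_A; (ii) V(ζ)·a_B − q⁻²·a_B·V(ζ) = ζ(1−q⁻²)·1; (iii) U(ζ) and Y(ζ) commute with a_B; (iv) Z(ζ)·a_B = a_B·Z(ζ) + ζ⁻¹(1−q²)·U(ζ)·d_B²·d_A⁻². -/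
noncomputable section

theorem osc_sq {K : Type*} [Field K] {R : Type*} [Ring R] [Algebra K R]
    {c : K} {d a : R} (h : d * a = c • (a * d)) :
    d ^ 2 * a = (c * c) • (a * d ^ 2) := by
  have : d * (d * a) = (c * c) • (a * (d * d)) := by
    rw [h, mul_smul_comm, ← mul_assoc, h, smul_mul_assoc, smul_smul, mul_assoc]
  simpa [sq, mul_assoc] using this

theorem osc_inv {K : Type*} [Field K] {R : Type*} [Ring R] [Algebra K R]
    {c : K} (hc0 : c ≠ 0) {d di a : R} (h1 : d * di = 1) (h2 : di * d = 1)
    (h : d * a = c • (a * d)) : di * a = c⁻¹ • (a * di) := by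
  have h3 : a * di = c • (di * a) := by
    have := congrArg (fun x => di * x * di) h
    simp only [mul_smul_comm, smul_mul_assoc] at this
    calc a * di = di * (d * a) * di := by rw [← mul_assoc, h2, one_mul]
    _ = c • (di * a) := by rw [this]; rw [mul_assoc, mul_assoc, h1, mul_one]
  rw [h3, smul_smul, inv_mul_cancel₀ hc0, one_smul]

theorem lmul {R : Type*} [Ring R] {x y s : R} (h : x * y = s) :
    ∀ z : R, x * (y * z) = s * z := by
  intro z; rw [← mul_assoc, h]

/-- Commutation relations of `V(ζ)` and `a_B` with `U(ζ)`, `Y(ζ)`, `Z(ζ)`, `a_A`, for two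
mutually commuting `q`-oscillator triples `(a_A, a*_A, d_A)`, `(a_B, a*_B, d_B)` in a
unital associative `K`-algebra `R`, where `U(ζ) = ζ·a*_A + a_B·d_A²`,
`V(ζ) = ζ·a*_B + a_A·d_B²`, `Y(ζ) = (ζq² − a_A·a_B)·d_A²`,
`Z(ζ) = ζ⁻¹q²·d_B² − a*_A·a*_B·d_A⁻²`. -/
theorem UVYZ_relations_II {K : Type*} [Field K] {R : Type*} [Ring R] [Algebra K R]
    (q : K) (hq : q ≠ 0)
    (aA aAs dA dAi aB aBs dB dBi : R)
    (hdA : dA * dAi = 1) (hdA' : dAi * dA = 1)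
    (hdB : dB * dBi = 1) (hdB' : dBi * dB = 1)
    (hA1 : dA * aA = q⁻¹ • (aA * dA)) (hA2 : dA * aAs = q • (aAs * dA))
    (hA3 : aA * aAs = 1 - q ^ 2 • dA ^ 2) (hA4 : aAs * aA = 1 - dA ^ 2)
    (hB1 : dB * aB = q⁻¹ • (aB * dB)) (hB2 : dB * aBs = q • (aBs * dB))
    (hB3 : aB * aBs = 1 - q ^ 2 • dB ^ 2) (hB4 : aBs * aB = 1 - dB ^ 2)
    (hc : ∀ x ∈ ({aA, aAs, dA, dAi} : Set R), ∀ y ∈ ({aB, aBs, dB, dBi} : Set R),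
      Commute x y)
    (ζ : K) (hζ : ζ ≠ 0)
    (U V Y Z : R)
    (hU : U = ζ • aAs + aB * dA ^ 2)
    (hV : V = ζ • aBs + aA * dB ^ 2)
    (hY : Y = (ζ * q ^ 2) • dA ^ 2 - aA * aB * dA ^ 2)
    (hZ : Z = (ζ⁻¹ * q ^ 2) • dB ^ 2 - aAs * aBs * dAi ^ 2) :
    (Commute V U ∧ Commute V Y ∧ Commute V Z ∧ Commute V aA) ∧
    V * aB - (q ^ 2)⁻¹ • (aB * V) = (ζ * (1 - (q ^ 2)⁻¹)) • (1 : R) ∧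
    (Commute U aB ∧ Commute Y aB) ∧
    Z * aB = aB * Z + (ζ⁻¹ * (1 - q ^ 2)) • (U * (dB ^ 2 * dAi ^ 2)) := by
  -- basic cross commutation facts
  have cAaB : Commute aA aB := hc _ (by simp) _ (by simp)
  have cAaBs : Commute aA aBs := hc _ (by simp) _ (by simp)
  have cAdB : Commute aA dB := hc _ (by simp) _ (by simp)
  have cAsaB : Commute aAs aB := hc _ (by simp) _ (by simp)
  have cAsaBs : Commute aAs aBs := hc _ (by simp) _ (by simp)
  have cAsdB : Commute aAs dB := hc _ (by simp) _ (by simp)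
  have cdAaB : Commute dA aB := hc _ (by simp) _ (by simp)
  have cdAaBs : Commute dA aBs := hc _ (by simp) _ (by simp)
  have cdAdB : Commute dA dB := hc _ (by simp) _ (by simp)
  have cdAiaB : Commute dAi aB := hc _ (by simp) _ (by simp)
  have cdAiaBs : Commute dAi aBs := hc _ (by simp) _ (by simp)
  have cdAidB : Commute dAi dB := hc _ (by simp) _ (by simp)
  -- oriented cross rewrites : B-atom * A-atom = A-atom * B-atom
  have r1 : aB * aA = aA * aB := cAaB.eq.symm
  have r2 : aB * aAs = aAs * aB := cAsaB.eq.symm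
  have r3 : aB * dA ^ 2 = dA ^ 2 * aB := (cdAaB.pow_left 2).eq.symm
  have r4 : aB * dAi ^ 2 = dAi ^ 2 * aB := (cdAiaB.pow_left 2).eq.symm
  have r5 : aBs * aA = aA * aBs := cAaBs.eq.symm
  have r6 : aBs * aAs = aAs * aBs := cAsaBs.eq.symm
  have r7 : aBs * dA ^ 2 = dA ^ 2 * aBs := (cdAaBs.pow_left 2).eq.symm
  have r8 : aBs * dAi ^ 2 = dAi ^ 2 * aBs := (cdAiaBs.pow_left 2).eq.symm
  have r9 : dB ^ 2 * aA = aA * dB ^ 2 := (cAdB.pow_right 2).eq.symm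
  have r10 : dB ^ 2 * aAs = aAs * dB ^ 2 := (cAsdB.pow_right 2).eq.symm
  have r11 : dB ^ 2 * dA ^ 2 = dA ^ 2 * dB ^ 2 := ((cdAdB.pow_right 2).pow_left 2).eq.symm
  have r12 : dB ^ 2 * dAi ^ 2 = dAi ^ 2 * dB ^ 2 := ((cdAidB.pow_right 2).pow_left 2).eq.symm
  -- scalar swap rewrites
  have s1 : dA ^ 2 * aA = (q⁻¹ * q⁻¹) • (aA * dA ^ 2) := osc_sq hA1
  have s2 : dA ^ 2 * aAs = (q * q) • (aAs * dA ^ 2) := osc_sq hA2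
  have iA1 : dAi * aA = (q⁻¹)⁻¹ • (aA * dAi) := osc_inv (inv_ne_zero hq) hdA hdA' hA1
  have iA2 : dAi * aAs = q⁻¹ • (aAs * dAi) := osc_inv hq hdA hdA' hA2
  have s3 : dAi ^ 2 * aA = ((q⁻¹)⁻¹ * (q⁻¹)⁻¹) • (aA * dAi ^ 2) := osc_sq iA1
  have s4 : dAi ^ 2 * aAs = (q⁻¹ * q⁻¹) • (aAs * dAi ^ 2) := osc_sq iA2
  have s5 : dB ^ 2 * aB = (q⁻¹ * q⁻¹) • (aB * dB ^ 2) := osc_sq hB1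
  have s6 : dB ^ 2 * aBs = (q * q) • (aBs * dB ^ 2) := osc_sq hB2
  -- d-inverse collapses
  have dd1 : dA ^ 2 * dAi ^ 2 = 1 := by
    rw [sq, sq, mul_assoc, ← mul_assoc dA dAi dAi, hdA, one_mul, hdA]
  have dd2 : dAi ^ 2 * dA ^ 2 = 1 := by
    rw [sq, sq, mul_assoc, ← mul_assoc dAi dA dA, hdA', one_mul, hdA']
  refine ⟨⟨?_, ?_, ?_, ?_⟩, ?_, ⟨?_, ?_⟩, ?_⟩ <;>
  · try rw [commute_iff_eq]
    simp only [hU, hV, hY, hZ, mul_add, add_mul, mul_sub, sub_mul, smul_add, smul_sub,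
      smul_mul_assoc, mul_smul_comm, smul_smul, mul_assoc, mul_one, one_mul,
      r1, lmul r1, r2, lmul r2, r3, lmul r3, r4, lmul r4, r5, lmul r5, r6, lmul r6,
      r7, lmul r7, r8, lmul r8, r9, lmul r9, r10, lmul r10, r11, lmul r11, r12, lmul r12,
      s1, lmul s1, s2, lmul s2, s3, lmul s3, s4, lmul s4, s5, lmul s5, s6, lmul s6,
      hA3, lmul hA3, hA4, lmul hA4, hB3, lmul hB3, hB4, lmul hB4,
      dd1, lmul dd1, dd2, lmul dd2]
    all_goals match_scalars
    all_goals (field_simp; try ring; try tauto)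
end
end

section
/- Let L°⁺_A(ζ₁) be the oscillator L-operator built from the triple (a_A, a*_A, d_A), and let L°⁻_B(ζ₂) be the 2×2 matrix over R with rows (d_B, −ζ₂·a*_B·d_B⁻¹) and (−ζ₂·a_B·d_B, (1 − q²ζ₂²d_B²)·d_B⁻¹) (the spin-reversed oscillator L-operator). Then, with ζ = ζ₁/ζ₂ and c(ζ₁,ζ₂) = ζ₁⁻¹ζ₂²(1 − q²ζ₁²), the product L°⁺_A(ζ₁)·L°⁻_B(ζ₂) equals the 2×2 matrix [[ (1 − ζ₁ζ₂·Y(ζ))·d_A⁻¹d_B , ( −ζ₁·(1 − ζ⁻¹q⁻²·Z(ζ))·a_A − c(ζ₁,ζ₂)·V(ζ) )·d_A d_B⁻¹ ], [ −ζ₂·U(ζ)·d_A⁻¹d_B , (1 − ζ₁ζ₂·Z(ζ))·d_A d_B⁻¹ ]]. -/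
noncomputable section

open Matrix

/-- Product of the oscillator L-operator `L°⁺_A(ζ₁)` with the spin-reversed oscillator
L-operator `L°⁻_B(ζ₂)`, expressed through `U(ζ)`, `V(ζ)`, `Y(ζ)`, `Z(ζ)` at `ζ = ζ₁/ζ₂`,
with `c(ζ₁,ζ₂) = ζ₁⁻¹ζ₂²(1 − q²ζ₁²)`. -/
theorem Lplus_mul_Lminus {K : Type*} [Field K] {R : Type*} [Ring R] [Algebra K R]
    (q : K) (hq : q ≠ 0)
    (aA aAs dA dAi aB aBs dB dBi : R)
    (hdA : dA * dAi = 1) (hdA' : dAi * dA = 1)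
    (hdB : dB * dBi = 1) (hdB' : dBi * dB = 1)
    (hA1 : dA * aA = q⁻¹ • (aA * dA)) (hA2 : dA * aAs = q • (aAs * dA))
    (hA3 : aA * aAs = 1 - q ^ 2 • dA ^ 2) (hA4 : aAs * aA = 1 - dA ^ 2)
    (hB1 : dB * aB = q⁻¹ • (aB * dB)) (hB2 : dB * aBs = q • (aBs * dB))
    (hB3 : aB * aBs = 1 - q ^ 2 • dB ^ 2) (hB4 : aBs * aB = 1 - dB ^ 2)
    (hc : ∀ x ∈ ({aA, aAs, dA, dAi} : Set R), ∀ y ∈ ({aB, aBs, dB, dBi} : Set R),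
      Commute x y)
    (ζ₁ ζ₂ : K) (h1 : ζ₁ ≠ 0) (h2 : ζ₂ ≠ 0)
    (U V Y Z : R)
    (hU : U = (ζ₁ / ζ₂) • aAs + aB * dA ^ 2)
    (hV : V = (ζ₁ / ζ₂) • aBs + aA * dB ^ 2)
    (hY : Y = ((ζ₁ / ζ₂) * q ^ 2) • dA ^ 2 - aA * aB * dA ^ 2)
    (hZ : Z = ((ζ₁ / ζ₂)⁻¹ * q ^ 2) • dB ^ 2 - aAs * aBs * dAi ^ 2) :
    (!![(1 - (q ^ 2 * ζ₁ ^ 2) • dA ^ 2) * dAi, -(ζ₁ • (aA * dA));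
        -(ζ₁ • (aAs * dAi)), dA] : Matrix (Fin 2) (Fin 2) R) *
      !![dB, -(ζ₂ • (aBs * dBi));
         -(ζ₂ • (aB * dB)), (1 - (q ^ 2 * ζ₂ ^ 2) • dB ^ 2) * dBi] =
    !![(1 - (ζ₁ * ζ₂) • Y) * (dAi * dB),
       (-(ζ₁ • ((1 - ((ζ₁ / ζ₂)⁻¹ * (q ^ 2)⁻¹) • Z) * aA))
          - (ζ₁⁻¹ * ζ₂ ^ 2 * (1 - q ^ 2 * ζ₁ ^ 2)) • V) * (dA * dBi);
       -(ζ₂ • (U * (dAi * dB))),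
       (1 - (ζ₁ * ζ₂) • Z) * (dA * dBi)] := by

  -- commutation facts between A and B generators
  have hcc : ∀ x ∈ ({aA, aAs, dA, dAi} : Set R), ∀ y ∈ ({aB, aBs, dB, dBi} : Set R),
      y * x = x * y := fun x hx y hy => ((hc x hx y hy).symm).eq
  have m1 : aA ∈ ({aA, aAs, dA, dAi} : Set R) := by simp
  have m2 : aAs ∈ ({aA, aAs, dA, dAi} : Set R) := by simp
  have m3 : dA ∈ ({aA, aAs, dA, dAi} : Set R) := by simp
  have m4 : dAi ∈ ({aA, aAs, dA, dAi} : Set R) := by simp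
  have n1 : aB ∈ ({aB, aBs, dB, dBi} : Set R) := by simp
  have n2 : aBs ∈ ({aB, aBs, dB, dBi} : Set R) := by simp
  have n3 : dB ∈ ({aB, aBs, dB, dBi} : Set R) := by simp
  have n4 : dBi ∈ ({aB, aBs, dB, dBi} : Set R) := by simp
  have assoc : ∀ {p r s : R}, p * r = s → ∀ x : R, p * (r * x) = s * x := by
    intro p r s h x; rw [← mul_assoc, h]
  -- derived q-relations with inverses
  have hA1' : dAi * aA = q • (aA * dAi) := by
    have h := congrArg (fun z => dAi * z * dAi) hA1
    simp only [smul_mul_assoc, mul_smul_comm, ← mul_assoc, hdA'] at h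
    rw [one_mul, mul_assoc, hdA, mul_one] at h
    rw [h, smul_smul, mul_inv_cancel₀ hq, one_smul]
  have hA2' : dAi * aAs = q⁻¹ • (aAs * dAi) := by
    have h := congrArg (fun z => dAi * z * dAi) hA2
    simp only [smul_mul_assoc, mul_smul_comm, ← mul_assoc, hdA'] at h
    rw [one_mul, mul_assoc, hdA, mul_one] at h
    rw [h, smul_smul, inv_mul_cancel₀ hq, one_smul]
  have hB1' : dBi * aB = q • (aB * dBi) := by
    have h := congrArg (fun z => dBi * z * dBi) hB1
    simp only [smul_mul_assoc, mul_smul_comm, ← mul_assoc, hdB'] at h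
    rw [one_mul, mul_assoc, hdB, mul_one] at h
    rw [h, smul_smul, mul_inv_cancel₀ hq, one_smul]
  have hB2' : dBi * aBs = q⁻¹ • (aBs * dBi) := by
    have h := congrArg (fun z => dBi * z * dBi) hB2
    simp only [smul_mul_assoc, mul_smul_comm, ← mul_assoc, hdB'] at h
    rw [one_mul, mul_assoc, hdB, mul_one] at h
    rw [h, smul_smul, inv_mul_cancel₀ hq, one_smul]
  have hA3' : aA * aAs = 1 - (q * q) • (dA * dA) := by rw [hA3, pow_two, pow_two]
  have hA4' : aAs * aA = 1 - dA * dA := by rw [hA4, pow_two]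
  have hB3' : aB * aBs = 1 - (q * q) • (dB * dB) := by rw [hB3, pow_two, pow_two]
  have hB4' : aBs * aB = 1 - dB * dB := by rw [hB4, pow_two]
  subst hU hV hY hZ
  ext i j
  fin_cases i <;> fin_cases j <;>
  · simp [Matrix.mul_apply, Fin.sum_univ_two]
    simp only [pow_two, sub_mul, mul_sub, smul_mul_assoc, mul_smul_comm, smul_smul, smul_sub,
      smul_add, sub_smul, add_mul, mul_add, neg_mul, mul_neg, neg_neg, smul_neg, neg_smul,
      one_mul, mul_one, mul_assoc,
      hA1, hA2, hA1', hA2', hB1, hB2, hB1', hB2',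
      assoc hA1, assoc hA2, assoc hA1', assoc hA2', assoc hB1, assoc hB2, assoc hB1', assoc hB2',
      hA3', hA4', hB3', hB4', assoc hA3', assoc hA4', assoc hB3', assoc hB4',
      hdA, hdA', hdB, hdB', assoc hdA, assoc hdA', assoc hdB, assoc hdB',
      hcc aA m1 aB n1, hcc aA m1 aBs n2, hcc aA m1 dB n3, hcc aA m1 dBi n4,
      hcc aAs m2 aB n1, hcc aAs m2 aBs n2, hcc aAs m2 dB n3, hcc aAs m2 dBi n4,
      hcc dA m3 aB n1, hcc dA m3 aBs n2, hcc dA m3 dB n3, hcc dA m3 dBi n4,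
      hcc dAi m4 aB n1, hcc dAi m4 aBs n2, hcc dAi m4 dB n3, hcc dAi m4 dBi n4,
      assoc (hcc aA m1 aB n1), assoc (hcc aA m1 aBs n2), assoc (hcc aA m1 dB n3),
      assoc (hcc aA m1 dBi n4), assoc (hcc aAs m2 aB n1), assoc (hcc aAs m2 aBs n2),
      assoc (hcc aAs m2 dB n3), assoc (hcc aAs m2 dBi n4), assoc (hcc dA m3 aB n1),
      assoc (hcc dA m3 aBs n2), assoc (hcc dA m3 dB n3), assoc (hcc dA m3 dBi n4),
      assoc (hcc dAi m4 aB n1), assoc (hcc dAi m4 aBs n2), assoc (hcc dAi m4 dB n3),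
      assoc (hcc dAi m4 dBi n4)]
    match_scalars <;> field_simp <;> ring
end
end

section
/- Left reduction relation for the twisted transfer matrix: suppose n ≥ 2 and let 𝐭*'(ζ) denote the twisted transfer matrix on the last n−1 sites (built from the inhomogeneities ξ₂,…,ξ_n and the same w). Then for every X ∈ End((K²)^{⊗(n−1)}), regarded as acting on sites 2,…,n, one has 𝐭*(ζ)( diag(w,w⁻¹)₁ ⊗ X ) = diag(w,w⁻¹)₁ ⊗ 𝐭*'(ζ)(X). -/
noncomputable section

open Matrix

/-- Entries of the six-vertex L-matrix `L°(η)` (first pair of indices: output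
(auxiliary, site) indices; second pair: input indices). -/
def sixvE {K : Type*} [Field K] (q η : K) (a b a' b' : Fin 2) : K :=
  if a = a' ∧ b = b' then (if a = b then 1 else (η - η⁻¹) / (q * η - q⁻¹ * η⁻¹))
  else if a = b' ∧ b = a' then (q - q⁻¹) / (q * η - q⁻¹ * η⁻¹) else 0

/-- The six-vertex L-matrix `L°_{a,i}(η)` acting on the auxiliary two-dimensional
space and the `i`-th site of `V = (K²)^{⊗n}` (sites indexed by `Fin n`, basis of `V`
indexed by `Fin n → Fin 2`). -/
def Laux {K : Type*} [Field K] (n : ℕ) (q η : K) (i : Fin n) :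
    Matrix (Fin 2 × (Fin n → Fin 2)) (Fin 2 × (Fin n → Fin 2)) K :=
  Matrix.of fun p r =>
    if ∀ j, j ≠ i → p.2 j = r.2 j then sixvE q η p.1 (p.2 i) r.1 (r.2 i) else 0

/-- The monodromy matrix `T_a(ζ) = L°_{a,n}(ζ/ξ_n) ⋯ L°_{a,1}(ζ/ξ₁)`. -/
def mono {K : Type*} [Field K] (n : ℕ) (q ζ : K) (ξ : Fin n → K) :
    Matrix (Fin 2 × (Fin n → Fin 2)) (Fin 2 × (Fin n → Fin 2)) K :=
  (((List.finRange n).reverse).map (fun i => Laux n q (ζ / ξ i) i)).prod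

/-- `diag(w, w⁻¹)` on the auxiliary space, tensored with `X` on `V`. -/
def auxTwist {K : Type*} [Field K] (n : ℕ) (w : K)
    (X : Matrix (Fin n → Fin 2) (Fin n → Fin 2) K) :
    Matrix (Fin 2 × (Fin n → Fin 2)) (Fin 2 × (Fin n → Fin 2)) K :=
  Matrix.of fun p r =>
    if p.1 = r.1 then (if p.1 = 0 then w else w⁻¹) * X p.2 r.2 else 0

/-- Partial trace over the auxiliary space. -/
def ptr {K : Type*} [Field K] (n : ℕ)
    (M : Matrix (Fin 2 × (Fin n → Fin 2)) (Fin 2 × (Fin n → Fin 2)) K) :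
    Matrix (Fin n → Fin 2) (Fin n → Fin 2) K :=
  Matrix.of fun s s' => ∑ ε : Fin 2, M (ε, s) (ε, s')

/-- The twisted transfer matrix
`𝐭*(ζ)(X) = Tr_a[ T_a(ζ)·(diag(w,w⁻¹)_a ⊗ X)·T_a(ζ)⁻¹ ]`. -/
def ttm {K : Type*} [Field K] (n : ℕ) (q ζ w : K) (ξ : Fin n → K)
    (X : Matrix (Fin n → Fin 2) (Fin n → Fin 2) K) :
    Matrix (Fin n → Fin 2) (Fin n → Fin 2) K :=
  ptr n (mono n q ζ ξ * auxTwist n w X * (mono n q ζ ξ)⁻¹)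

/-- `diag(w,w⁻¹)₁ ⊗ X`: the quasi-local operator on `(K²)^{⊗(n+1)}` which acts by
`diag(w,w⁻¹)` on the first site and by `X` on the remaining `n` sites. -/
def embTail {K : Type*} [Field K] (n : ℕ) (w : K)
    (X : Matrix (Fin n → Fin 2) (Fin n → Fin 2) K) :
    Matrix (Fin (n + 1) → Fin 2) (Fin (n + 1) → Fin 2) K :=
  Matrix.of fun s s' =>
    if s 0 = s' 0 then
      (if s 0 = 0 then w else w⁻¹) * X (fun i => s i.succ) (fun i => s' i.succ)
    else 0

/-!
Split off the first site: `T(ζ) = T'(ζ) · L_{a,1}(ζ/ξ₁)`, where `T'` is the monodromy matrix of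
sites `2, …, n` (acting trivially on site 1). The six-vertex matrix conserves the total spin of
its two legs, so `L_{a,1}` commutes with `diag(w,w⁻¹)_a ⊗ diag(w,w⁻¹)_1 ⊗ X` and cancels from the
conjugation as soon as it is invertible, i.e. `(ζ/ξ₁)² ∉ {q², q⁻²}`. What remains is
`T' (diag(w,w⁻¹)_a ⊗ X) T'⁻¹ ⊗ diag(w,w⁻¹)_1`, whose partial trace over `a` is the right-hand side.
-/

open Kronecker

namespace Matrix

variable {l m n R : Type*}

def kroneckerAlong [Mul R] (e : l ≃ m × n) (A : Matrix m m R) (B : Matrix n n R) :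
    Matrix l l R :=
  (A ⊗ₖ B).submatrix e e

@[simp]
theorem kroneckerAlong_apply [Mul R] (e : l ≃ m × n) (A : Matrix m m R) (B : Matrix n n R)
    (i j : l) : kroneckerAlong e A B i j = A (e i).1 (e j).1 * B (e i).2 (e j).2 :=
  rfl

theorem kroneckerAlong_mul [Fintype l] [Fintype m] [Fintype n] [CommSemiring R] (e : l ≃ m × n)
    (A A' : Matrix m m R) (B B' : Matrix n n R) :
    kroneckerAlong e A B * kroneckerAlong e A' B' = kroneckerAlong e (A * A') (B * B') := by
  rw [kroneckerAlong, kroneckerAlong, kroneckerAlong, submatrix_mul_equiv, mul_kronecker_mul]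

theorem kroneckerAlong_one_one [DecidableEq l] [DecidableEq m] [DecidableEq n]
    [MulZeroOneClass R] (e : l ≃ m × n) :
    kroneckerAlong e (1 : Matrix m m R) (1 : Matrix n n R) = 1 := by
  rw [kroneckerAlong, one_kronecker_one, submatrix_one_equiv]

theorem kroneckerAlong_inv [Fintype l] [Fintype m] [Fintype n] [DecidableEq l] [DecidableEq m]
    [DecidableEq n] [CommRing R] (e : l ≃ m × n) (A : Matrix m m R) (B : Matrix n n R) :
    (kroneckerAlong e A B)⁻¹ = kroneckerAlong e A⁻¹ B⁻¹ := by
  rw [kroneckerAlong, kroneckerAlong, inv_submatrix_equiv, inv_kronecker]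

theorem isUnit_det_kroneckerAlong [Fintype l] [Fintype m] [Fintype n] [DecidableEq l]
    [DecidableEq m] [DecidableEq n] [CommRing R] (e : l ≃ m × n) {A : Matrix m m R}
    {B : Matrix n n R} (hA : IsUnit A.det) (hB : IsUnit B.det) :
    IsUnit (kroneckerAlong e A B).det := by
  rw [kroneckerAlong, det_submatrix_equiv_self, det_kronecker]
  exact (hA.pow _).mul (hB.pow _)

theorem commute_kroneckerAlong [Fintype l] [Fintype m] [Fintype n] [CommSemiring R]
    (e : l ≃ m × n) {A A' : Matrix m m R} {B B' : Matrix n n R} (hA : Commute A A')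
    (hB : Commute B B') :
    Commute (kroneckerAlong e A B) (kroneckerAlong e A' B') := by
  rw [Commute, SemiconjBy, kroneckerAlong_mul, kroneckerAlong_mul, hA.eq, hB.eq]

theorem conj_mul_of_commute [Fintype n] [DecidableEq n] [CommRing R] {T L A : Matrix n n R}
    (hL : IsUnit L.det) (h : Commute L A) : T * L * A * (T * L)⁻¹ = T * A * T⁻¹ := by
  rw [mul_inv_rev, mul_assoc T, h.eq, ← mul_assoc, ← mul_assoc, mul_assoc (T * A),
    mul_nonsing_inv _ hL, mul_one]

end Matrix

namespace TwistedTransfer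

variable {K : Type*} [Field K]

def β (q η : K) : K := (η - η⁻¹) / (q * η - q⁻¹ * η⁻¹)

def γ (q η : K) : K := (q - q⁻¹) / (q * η - q⁻¹ * η⁻¹)

theorem β_sq_sub_γ_sq {q η : K} (hq : q ≠ 0) (hη : η ≠ 0) :
    β q η ^ 2 - γ q η ^ 2 = (η ^ 2 - q ^ 2) / (q ^ 2 * η ^ 2 - 1) := by
  have hden : q * η - q⁻¹ * η⁻¹ = (q ^ 2 * η ^ 2 - 1) / (q * η) := by field_simp
  rw [β, γ, hden]
  by_cases h : q ^ 2 * η ^ 2 - 1 = 0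
  · simp [h]
  · rw [div_div_eq_mul_div, div_div_eq_mul_div, div_pow, div_pow, div_sub_div_same,
      div_eq_div_iff (pow_ne_zero _ h) h]
    field_simp
    ring

theorem β_sq_sub_γ_sq_ne_zero {q η : K} (hq : q ≠ 0) (hη : η ≠ 0) (h₁ : η ^ 2 ≠ q ^ 2)
    (h₂ : η ^ 2 ≠ (q ^ 2)⁻¹) : β q η ^ 2 - γ q η ^ 2 ≠ 0 := by
  have h₂' : q ^ 2 * η ^ 2 - 1 ≠ 0 := fun h =>
    h₂ (eq_inv_of_mul_eq_one_left (by linear_combination h))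
  rw [β_sq_sub_γ_sq hq hη]
  exact div_ne_zero (sub_ne_zero.mpr h₁) h₂'

def sixVertexForm (b g : K) : Matrix (Fin 2 × Fin 2) (Fin 2 × Fin 2) K :=
  of fun p r => if p = r then (if p.1 = p.2 then 1 else b) else if p = r.swap then g else 0

theorem sixvE_eq_sixVertexForm (q η : K) (a b a' b' : Fin 2) :
    sixvE q η a b a' b' = sixVertexForm (β q η) (γ q η) (a, b) (a', b') := by
  simp [sixvE, sixVertexForm, β, γ, Prod.ext_iff]

theorem sixVertexForm_mul_sixVertexForm (b g b' g' : K) :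
    sixVertexForm b g * sixVertexForm b' g' =
      sixVertexForm (b * b' + g * g') (b * g' + g * b') := by
  ext ⟨a₁, a₂⟩ ⟨c₁, c₂⟩
  simp only [mul_apply, Fintype.sum_prod_type, Fin.sum_univ_two]
  fin_cases a₁ <;> fin_cases a₂ <;> fin_cases c₁ <;> fin_cases c₂ <;>
    simp [sixVertexForm] <;> ring

theorem sixVertexForm_one_zero : sixVertexForm (1 : K) 0 = 1 := by
  ext p r
  by_cases h : p = r <;> simp [sixVertexForm, one_apply, h]

theorem isUnit_det_sixVertexForm {b g : K} (h : b ^ 2 - g ^ 2 ≠ 0) :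
    IsUnit (sixVertexForm b g).det := by
  refine isUnit_det_of_right_inverse
    (B := sixVertexForm (b / (b ^ 2 - g ^ 2)) (-g / (b ^ 2 - g ^ 2))) ?_
  rw [sixVertexForm_mul_sixVertexForm, ← sixVertexForm_one_zero]
  congr 1
  · field_simp
    ring
  · ring

theorem commute_sixVertexForm_diagonal (b g : K) {d : Fin 2 × Fin 2 → K}
    (hd : ∀ p, d p.swap = d p) : Commute (sixVertexForm b g) (diagonal d) := by
  ext p r
  rw [mul_diagonal, diagonal_mul]
  by_cases h₁ : p = r
  · rw [h₁, mul_comm]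
  by_cases h₂ : p = r.swap
  · simp [sixVertexForm, h₂, hd, mul_comm]
  · simp [sixVertexForm, h₁, h₂]

variable {σ τ : Type*} {n : ℕ}

@[simps]
def auxHeadSplit (n : ℕ) : τ × (Fin (n + 1) → σ) ≃ (τ × σ) × (Fin n → σ) where
  toFun p := ((p.1, p.2 0), Fin.tail p.2)
  invFun p := (p.1.1, Fin.cons p.1.2 p.2)
  left_inv p := by simp
  right_inv p := by simp

@[simps]
def auxTailSplit (n : ℕ) : τ × (Fin (n + 1) → σ) ≃ (τ × (Fin n → σ)) × σ where
  toFun p := ((p.1, Fin.tail p.2), p.2 0)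
  invFun p := (p.1.1, Fin.cons p.2 p.1.2)
  left_inv p := by simp
  right_inv p := by simp

def twist (w : K) (ε : Fin 2) : K := if ε = 0 then w else w⁻¹

theorem laux_succ (q η : K) (i : Fin n) :
    Laux (n + 1) q η i.succ = kroneckerAlong (auxTailSplit n) (Laux n q η i) 1 := by
  ext p r
  simp only [Laux, of_apply, kroneckerAlong_apply, auxTailSplit_apply, one_apply, Fin.tail,
    Fin.forall_fin_succ (P := fun j => j ≠ i.succ → p.2 j = r.2 j)]
  simp only [ne_eq, eq_comm (a := (0 : Fin (n + 1))), Fin.succ_ne_zero, not_false_eq_true,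
    forall_const, Fin.succ_inj, mul_ite, mul_one, mul_zero]
  exact ite_and _ _ _ _

theorem laux_zero (q η : K) :
    Laux (n + 1) q η 0 =
      kroneckerAlong (auxHeadSplit n) (sixVertexForm (β q η) (γ q η)) 1 := by
  ext p r
  simp only [Laux, of_apply, kroneckerAlong_apply, auxHeadSplit_apply, one_apply,
    sixvE_eq_sixVertexForm, Fin.forall_fin_succ, ne_eq, not_true_eq_false, false_imp_iff,
    Fin.succ_ne_zero, not_false_eq_true, forall_const, true_and, Fin.tail_def, funext_iff]
  split_ifs <;> simp

theorem auxTwist_embTail_eq_head (w : K) (X : Matrix (Fin n → Fin 2) (Fin n → Fin 2) K) :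
    auxTwist (n + 1) w (embTail n w X)
      = kroneckerAlong (auxHeadSplit n) (diagonal fun p => twist w p.1 * twist w p.2) X := by
  ext p r
  simp only [auxTwist, embTail, of_apply, kroneckerAlong_apply, auxHeadSplit_apply, diagonal_apply,
    twist, Prod.ext_iff, Fin.tail_def]
  by_cases h₁ : p.1 = r.1 <;> by_cases h₂ : p.2 0 = r.2 0 <;> simp [h₁, h₂, mul_assoc]

theorem auxTwist_embTail_eq_tail (w : K) (X : Matrix (Fin n → Fin 2) (Fin n → Fin 2) K) :
    auxTwist (n + 1) w (embTail n w X)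
      = kroneckerAlong (auxTailSplit n) (auxTwist n w X) (diagonal (twist w)) := by
  ext p r
  simp only [auxTwist, embTail, of_apply, kroneckerAlong_apply, auxTailSplit_apply, diagonal_apply,
    twist, Fin.tail_def]
  by_cases h₁ : p.1 = r.1
  · by_cases h₂ : p.2 0 = r.2 0
    · simp only [h₁, h₂, if_true]
      split_ifs <;> ring
    · simp [h₂]
  · simp [h₁]

theorem ptr_kroneckerAlong_diagonal_twist (w : K)
    (M : Matrix (Fin 2 × (Fin n → Fin 2)) (Fin 2 × (Fin n → Fin 2)) K) :
    ptr (n + 1) (kroneckerAlong (auxTailSplit n) M (diagonal (twist w))) =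
      embTail n w (ptr n M) := by
  ext s s'
  simp only [ptr, embTail, of_apply, kroneckerAlong_apply, auxTailSplit_apply, diagonal_apply,
    twist, Fin.tail_def]
  by_cases h : s 0 = s' 0
  · simp only [h, if_true, Fin.sum_univ_two]
    split_ifs <;> ring
  · simp [h]

theorem mono_succ (q ζ : K) (ξ : Fin (n + 1) → K) :
    mono (n + 1) q ζ ξ = kroneckerAlong (auxTailSplit n) (mono n q ζ fun i => ξ i.succ) 1 *
      Laux (n + 1) q (ζ / ξ 0) 0 := by
  have hprod := List.prod_hom₂ (List.finRange n).reverse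
    (kroneckerAlong (R := K) (auxTailSplit (σ := Fin 2) (τ := Fin 2) n))
    (fun A A' B B' => (kroneckerAlong_mul _ A A' B B').symm) (kroneckerAlong_one_one _)
    (fun i => Laux n q (ζ / ξ i.succ) i) (fun _ => 1)
  simp only [← laux_succ, List.map_const', List.prod_replicate, one_pow] at hprod
  rw [mono, mono, List.finRange_succ, List.reverse_cons, List.map_append, List.prod_append,
    ← List.map_reverse, List.map_map, Function.comp_def, hprod]
  simp only [List.map_reverse, List.map_cons, List.map_nil, List.prod_cons, List.prod_nil, mul_one]

theorem isUnit_det_laux_zero {q η : K} (hq : q ≠ 0) (hη : η ≠ 0) (h₁ : η ^ 2 ≠ q ^ 2)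
    (h₂ : η ^ 2 ≠ (q ^ 2)⁻¹) : IsUnit (Laux (n + 1) q η 0).det := by
  rw [laux_zero]
  exact isUnit_det_kroneckerAlong _
    (isUnit_det_sixVertexForm (β_sq_sub_γ_sq_ne_zero hq hη h₁ h₂)) (by simp)

theorem commute_laux_zero_auxTwist_embTail (q η w : K)
    (X : Matrix (Fin n → Fin 2) (Fin n → Fin 2) K) :
    Commute (Laux (n + 1) q η 0) (auxTwist (n + 1) w (embTail n w X)) := by
  rw [laux_zero, auxTwist_embTail_eq_head]
  exact commute_kroneckerAlong _ (commute_sixVertexForm_diagonal _ _ fun p => mul_comm _ _)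
    (Commute.one_left X)

end TwistedTransfer

open TwistedTransfer

theorem ttm_left_reduction_general {K : Type*} [Field K] (n : ℕ)
    (q w ζ : K) (hq : q ≠ 0) (hζ : ζ ≠ 0)
    (ξ : Fin (n + 1) → K) (hξ : ∀ i, ξ i ≠ 0)
    (hr : ∀ i, (ζ / ξ i) ^ 2 ≠ q ^ 2 ∧ (ζ / ξ i) ^ 2 ≠ (q ^ 2)⁻¹)
    (X : Matrix (Fin n → Fin 2) (Fin n → Fin 2) K) :
    ttm (n + 1) q ζ w ξ (embTail n w X)
      = embTail n w (ttm n q ζ w (fun i => ξ i.succ) X) := by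
  have hL := isUnit_det_laux_zero (n := n) hq (div_ne_zero hζ (hξ 0)) (hr 0).1 (hr 0).2
  rw [ttm, mono_succ, conj_mul_of_commute hL (commute_laux_zero_auxTwist_embTail _ _ w X),
    auxTwist_embTail_eq_tail, kroneckerAlong_inv, inv_one, kroneckerAlong_mul,
    kroneckerAlong_mul, one_mul, mul_one, ptr_kroneckerAlong_diagonal_twist, ttm]

/-- Left reduction relation for the twisted transfer matrix: on a chain with `n+1 ≥ 2`
sites, `𝐭*(ζ)(diag(w,w⁻¹)₁ ⊗ X) = diag(w,w⁻¹)₁ ⊗ 𝐭*'(ζ)(X)`, where `𝐭*'` is the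
twisted transfer matrix on the last `n` sites (inhomogeneities `ξ₂, …, ξ_{n+1}`). -/
theorem ttm_left_reduction {K : Type*} [Field K] (n : ℕ) (hn : 1 ≤ n)
    (q w ζ : K) (hq : q ≠ 0) (hq2 : q ^ 2 ≠ 1) (hw : w ≠ 0) (hζ : ζ ≠ 0)
    (ξ : Fin (n + 1) → K) (hξ : ∀ i, ξ i ≠ 0)
    (hr : ∀ i, (ζ / ξ i) ^ 2 ≠ q ^ 2 ∧ (ζ / ξ i) ^ 2 ≠ (q ^ 2)⁻¹)
    (X : Matrix (Fin n → Fin 2) (Fin n → Fin 2) K) :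
    ttm (n + 1) q ζ w ξ (embTail n w X)
      = embTail n w (ttm n q ζ w (fun i => ξ i.succ) X) :=
  ttm_left_reduction_general n q w ζ hq hζ ξ hξ hr X
end
end

section
/- Spin-reversal symmetry of the twisted transfer matrix: let J = (σ¹)^{⊗n} ∈ End(V), where σ¹ = [[0,1],[1,0]], let 𝕁(X) = J·X·J, and write 𝐭*_w(ζ) for the twisted transfer matrix with twist parameter w. Then 𝕁 ∘ 𝐭*_{w⁻¹}(ζ) ∘ 𝕁 = 𝐭*_w(ζ) as linear operators on End(V). -/
noncomputable section

open Matrix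

/-- The global spin-reversal operator `J = (σ¹)^{⊗n}` on `V = (K²)^{⊗n}`. -/
def Jmat {K : Type*} [Field K] (n : ℕ) :
    Matrix (Fin n → Fin 2) (Fin n → Fin 2) K :=
  Matrix.of fun s s' => if ∀ i, s i ≠ s' i then 1 else 0

/-! ### Auxiliary material -/

/-- flip on `Fin 2`. -/
def fl2 : Fin 2 ≃ Fin 2 := Equiv.swap 0 1

lemma ne_iff_eq_fl2 (a b : Fin 2) : a ≠ b ↔ b = fl2 a := by
  fin_cases a <;> fin_cases b <;> decide

lemma fl2_eq_fl2 (a b : Fin 2) : (fl2 a = fl2 b) ↔ a = b :=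
  Equiv.apply_eq_iff_eq _

lemma fl2_eq_zero (a : Fin 2) : (fl2 a = 0) ↔ a = 1 := by fin_cases a <;> decide

lemma fl2_fl2 (a : Fin 2) : fl2 (fl2 a) = a := Equiv.swap_apply_self _ _ _

/-- flip on all sites. -/
def sflip (n : ℕ) : (Fin n → Fin 2) ≃ (Fin n → Fin 2) :=
  Equiv.piCongrRight fun _ => fl2

lemma sflip_apply (n : ℕ) (s : Fin n → Fin 2) (i : Fin n) :
    sflip n s i = fl2 (s i) := rfl

lemma sflip_sflip (n : ℕ) (s : Fin n → Fin 2) : sflip n (sflip n s) = s := by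
  funext i; simp [sflip_apply, fl2_fl2]

/-- full flip (auxiliary space and all sites). -/
def pflip (n : ℕ) : (Fin 2 × (Fin n → Fin 2)) ≃ (Fin 2 × (Fin n → Fin 2)) :=
  fl2.prodCongr (sflip n)

lemma pflip_apply (n : ℕ) (p : Fin 2 × (Fin n → Fin 2)) :
    pflip n p = (fl2 p.1, sflip n p.2) := rfl

section Main
variable {K : Type*} [Field K] (n : ℕ)

lemma Jmat_apply (s s' : Fin n → Fin 2) :
    Jmat n s s' = if s' = sflip n s then (1 : K) else 0 := by
  unfold Jmat
  simp only [of_apply]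
  congr 1
  simp only [eq_iff_iff]
  constructor
  · intro h; funext i; exact (ne_iff_eq_fl2 _ _).1 (h i)
  · intro h i; rw [h]; exact (ne_iff_eq_fl2 _ _).2 rfl

lemma Jmat_mul (X : Matrix (Fin n → Fin 2) (Fin n → Fin 2) K) :
    Jmat n * X = X.submatrix (sflip n) id := by
  ext s s'
  simp only [mul_apply, Jmat_apply, ite_mul, one_mul, zero_mul, submatrix_apply, id_eq]
  rw [Finset.sum_ite_eq' Finset.univ (sflip n s) (fun t => X t s')]
  simp

lemma mul_Jmat (X : Matrix (Fin n → Fin 2) (Fin n → Fin 2) K) :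
    X * Jmat n = X.submatrix id (sflip n) := by
  ext s s'
  have key : ∀ t : Fin n → Fin 2, (s' = sflip n t) ↔ (t = sflip n s') := by
    intro t
    constructor <;> intro h <;> rw [h, sflip_sflip]
  simp only [mul_apply, Jmat_apply, mul_ite, mul_one, mul_zero, submatrix_apply, id_eq, key]
  rw [Finset.sum_ite_eq' Finset.univ (sflip n s') (fun t => X s t)]
  simp

lemma sixvE_flip (q η : K) (a b a' b' : Fin 2) :
    sixvE q η (fl2 a) (fl2 b) (fl2 a') (fl2 b') = sixvE q η a b a' b' := by
  unfold sixvE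
  simp only [fl2_eq_fl2]

lemma Laux_flip (q η : K) (i : Fin n) :
    (Laux n q η i).submatrix (pflip n) (pflip n) = Laux n q η i := by
  ext p r
  simp only [submatrix_apply, pflip_apply]
  unfold Laux
  simp only [of_apply, sflip_apply, ne_eq, fl2_eq_fl2, sixvE_flip]

lemma mono_flip (q ζ : K) (ξ : Fin n → K) :
    (mono n q ζ ξ).submatrix (pflip n) (pflip n) = mono n q ζ ξ := by
  unfold mono
  generalize ((List.finRange n).reverse) = l
  induction l with
  | nil => simp [Matrix.submatrix_one_equiv]
  | cons i l ih =>
      simp only [List.map_cons, List.prod_cons]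
      rw [← Matrix.submatrix_mul_equiv (Laux n q (ζ / ξ i) i) _ _ (pflip n) _,
        Laux_flip, ih]

lemma auxTwist_flip (w : K) (X : Matrix (Fin n → Fin 2) (Fin n → Fin 2) K) :
    (auxTwist n w⁻¹ (X.submatrix (sflip n) (sflip n))).submatrix (pflip n) (pflip n)
      = auxTwist n w X := by
  ext p r
  simp only [submatrix_apply, pflip_apply]
  unfold auxTwist
  simp only [of_apply, submatrix_apply, sflip_sflip, fl2_eq_fl2, fl2_eq_zero]
  obtain ⟨a, s⟩ := p
  fin_cases a <;> simp

lemma ptr_flip (M : Matrix (Fin 2 × (Fin n → Fin 2)) (Fin 2 × (Fin n → Fin 2)) K) :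
    ptr n (M.submatrix (pflip n) (pflip n)) = (ptr n M).submatrix (sflip n) (sflip n) := by
  ext s s'
  unfold ptr
  simp only [of_apply, submatrix_apply, pflip_apply]
  exact Fintype.sum_equiv fl2 _ _ (fun ε => rfl)

end Main

/-- Spin-reversal symmetry of the twisted transfer matrix:
`𝕁 ∘ 𝐭*_{w⁻¹}(ζ) ∘ 𝕁 = 𝐭*_w(ζ)`, where `𝕁(X) = J·X·J`. -/
theorem ttm_spin_reversal {K : Type*} [Field K] (n : ℕ)
    (q w ζ : K) (hq : q ≠ 0) (hq2 : q ^ 2 ≠ 1) (hw : w ≠ 0) (hζ : ζ ≠ 0)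
    (ξ : Fin n → K) (hξ : ∀ i, ξ i ≠ 0)
    (hr : ∀ i, (ζ / ξ i) ^ 2 ≠ q ^ 2 ∧ (ζ / ξ i) ^ 2 ≠ (q ^ 2)⁻¹)
    (X : Matrix (Fin n → Fin 2) (Fin n → Fin 2) K) :
    Jmat n * ttm n q ζ w⁻¹ ξ (Jmat n * X * Jmat n) * Jmat n = ttm n q ζ w ξ X := by
  have hJXJ : Jmat n * X * Jmat n = X.submatrix (sflip n) (sflip n) := by
    rw [Jmat_mul, mul_Jmat, Matrix.submatrix_submatrix]
    rfl
  set T := mono n q ζ ξ with hT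
  have hTinv : (T⁻¹).submatrix (pflip n) (pflip n) = T⁻¹ := by
    rw [← Matrix.inv_submatrix_equiv T (pflip n) (pflip n), mono_flip]
  rw [hJXJ]
  unfold ttm
  rw [Jmat_mul, mul_Jmat, Matrix.submatrix_submatrix, Function.comp_id, Function.id_comp,
    ← ptr_flip]
  congr 1
  rw [← Matrix.submatrix_mul_equiv (T * auxTwist n w⁻¹ (X.submatrix (sflip n) (sflip n)))
      T⁻¹ _ (pflip n) _,
    ← Matrix.submatrix_mul_equiv T (auxTwist n w⁻¹ (X.submatrix (sflip n) (sflip n)))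
      _ (pflip n) _,
    mono_flip, auxTwist_flip, hTinv]
end
end

section
/- Weighted trace of the twisted transfer matrix: fix 1 ≤ m < n, assume (ξ_n/ξ_i)² ∉ {q², q⁻²} for all i < n, and let u ∈ K be nonzero with 1 + u² ≠ 0 (u plays the role of q^{κ/2}). For N ≥ 1 and Y ∈ End((K²)^{⊗N}) define the weighted trace tr^κ_N(Y) = tr( diag(u⁻¹,u)^{⊗N} · Y ) / (u + u⁻¹)^N. Then for every X ∈ End((K²)^{⊗m}) acting on sites 1,…,m: tr^κ_n( 𝐭*(ξ_n)(X ⊗ id) ) = 2·(w + u²·w⁻¹)/(1 + u²) · tr^κ_m(X). -/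
noncomputable section

open Matrix

/-- `X ⊗ id`: an endomorphism of `(K²)^{⊗m}` acting on the first `m` sites of
`V = (K²)^{⊗n}`, identity on the remaining sites. -/
def embed {K : Type*} [Field K] (m n : ℕ) (h : m ≤ n)
    (X : Matrix (Fin m → Fin 2) (Fin m → Fin 2) K) :
    Matrix (Fin n → Fin 2) (Fin n → Fin 2) K :=
  Matrix.of fun s s' =>
    if ∀ j : Fin n, m ≤ (j : ℕ) → s j = s' j then
      X (fun i => s (Fin.castLE h i)) (fun i => s' (Fin.castLE h i))
    else 0

/-- The weighted trace `tr^κ_N(Y) = tr( diag(u⁻¹,u)^{⊗N} · Y ) / (u + u⁻¹)^N`. -/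
def wtr {K : Type*} [Field K] (N : ℕ) (u : K)
    (Y : Matrix (Fin N → Fin 2) (Fin N → Fin 2) K) : K :=
  Matrix.trace
      (Matrix.diagonal (fun s : Fin N → Fin 2 => ∏ i, (if s i = 0 then u⁻¹ else u)) * Y)
    / (u + u⁻¹) ^ N

/-!
At `ζ = ξ_n` the last factor of the monodromy matrix is `L°(1)`, the swap of the auxiliary space
with site `n`, so `T_a(ξ_n) = L°(1)·T'` with `T'` built from sites `1, …, n-1` only. Moving the
weight `diag(u⁻¹,u)^{⊗n}` through the swap turns it into the weight on the auxiliary space and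
sites `1, …, n-1`, which commutes with `T'` since every `L°` conserves the number of up spins.
The weighted trace of `𝐭*(ξ_n)(Y)` is therefore that of `diag(w,w⁻¹)_a ⊗ Y` with site `n`
unweighted: the auxiliary space contributes `u⁻¹w + uw⁻¹`, site `n` contributes `2`, and every
site on which `X ⊗ id` acts trivially contributes `u⁻¹ + u`, cancelled by the normalisation.
Invertibility of `T_a` comes from unitarity, `L°(η)·L°(η⁻¹) = 1`.
-/

open Kronecker

section SixVertex

variable {K : Type*} [Field K] {q η : K}

def sixv (q η : K) : Matrix (Fin 2 × Fin 2) (Fin 2 × Fin 2) K :=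
  Matrix.of fun p r => sixvE q η p.1 p.2 r.1 r.2

lemma mul_sub_inv_mul_inv_ne_zero (hq : q ≠ 0) (hη : η ≠ 0) (h : η ^ 2 ≠ (q ^ 2)⁻¹) :
    q * η - q⁻¹ * η⁻¹ ≠ 0 := by
  contrapose! h
  field_simp at h ⊢
  linear_combination h

lemma sixv_mul_sixv_inv (hq : q ≠ 0) (hη : η ≠ 0) (h₁ : η ^ 2 ≠ q ^ 2)
    (h₂ : η ^ 2 ≠ (q ^ 2)⁻¹) : sixv q η * sixv q η⁻¹ = 1 := by
  have hD := mul_sub_inv_mul_inv_ne_zero hq hη h₂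
  have hD' : q * η⁻¹ - q⁻¹ * η ≠ 0 := by
    simpa using mul_sub_inv_mul_inv_ne_zero hq (inv_ne_zero hη) (by simpa [inv_pow] using h₁)
  ext ⟨a, b⟩ ⟨c, d⟩
  fin_cases a <;> fin_cases b <;> fin_cases c <;> fin_cases d <;>
    simp [sixv, sixvE, mul_apply, Fintype.sum_prod_type] <;>
    rw [div_mul_div_comm, div_mul_div_comm, ← add_div, div_eq_iff (mul_ne_zero hD hD')] <;>
    field_simp <;> ring

lemma Laux_apply_ne_zero {n : ℕ} {i : Fin n} {p r : Fin 2 × (Fin n → Fin 2)}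
    (h : Laux n q η i p r ≠ 0) :
    (∀ j, j ≠ i → p.2 j = r.2 j) ∧
      (p.1 = r.1 ∧ p.2 i = r.2 i ∨ p.1 = r.2 i ∧ p.2 i = r.1) := by
  simp only [Laux, sixvE, of_apply] at h
  split_ifs at h <;> tauto

lemma Laux_one_apply_ne_zero {n : ℕ} {i : Fin n} {p r : Fin 2 × (Fin n → Fin 2)}
    (h : Laux n q 1 i p r ≠ 0) :
    (∀ j, j ≠ i → p.2 j = r.2 j) ∧ p.1 = r.2 i ∧ p.2 i = r.1 := by
  simp only [Laux, sixvE, of_apply, inv_one, sub_self, zero_div] at h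
  split_ifs at h <;> grind

end SixVertex

section Invertibility

variable {K : Type*} [Field K] {n : ℕ}

def siteEquiv (i : Fin n) :
    Fin 2 × (Fin n → Fin 2) ≃ (Fin 2 × Fin 2) × ({j : Fin n // j ≠ i} → Fin 2) :=
  ((Equiv.refl (Fin 2)).prodCongr (Equiv.piSplitAt i fun _ => Fin 2)).trans
    (Equiv.prodAssoc _ _ _).symm

lemma Laux_eq_submatrix (q η : K) (i : Fin n) :
    Laux n q η i = (sixv q η ⊗ₖ (1 : Matrix ({j // j ≠ i} → Fin 2) _ K)).submatrix
      (siteEquiv i) (siteEquiv i) := by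
  ext ⟨a, s⟩ ⟨a', s'⟩
  simp [Laux, siteEquiv, sixv, one_apply, funext_iff]

lemma Laux_mul_Laux_inv {q η : K} (hq : q ≠ 0) (hη : η ≠ 0) (h₁ : η ^ 2 ≠ q ^ 2)
    (h₂ : η ^ 2 ≠ (q ^ 2)⁻¹) (i : Fin n) : Laux n q η i * Laux n q η⁻¹ i = 1 := by
  rw [Laux_eq_submatrix, Laux_eq_submatrix, submatrix_mul_equiv, ← mul_kronecker_mul,
    sixv_mul_sixv_inv hq hη h₁ h₂, one_mul, one_kronecker_one, submatrix_one_equiv]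

lemma isUnit_Laux {q η : K} (hq : q ≠ 0) (hη : η ≠ 0) (h₁ : η ^ 2 ≠ q ^ 2)
    (h₂ : η ^ 2 ≠ (q ^ 2)⁻¹) (i : Fin n) : IsUnit (Laux n q η i) :=
  (isUnit_iff_isUnit_det _).mpr (isUnit_det_of_right_inverse (Laux_mul_Laux_inv hq hη h₁ h₂ i))

lemma isUnit_mono {q ζ : K} {ξ : Fin n → K} (hq : q ≠ 0) (hζ : ζ ≠ 0) (hξ : ∀ i, ξ i ≠ 0)
    (h : ∀ i, (ζ / ξ i) ^ 2 ≠ q ^ 2 ∧ (ζ / ξ i) ^ 2 ≠ (q ^ 2)⁻¹) : IsUnit (mono n q ζ ξ) := by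
  refine List.prod_isUnit fun L hL => ?_
  obtain ⟨i, -, rfl⟩ := List.mem_map.mp hL
  exact isUnit_Laux hq (div_ne_zero hζ (hξ i)) (h i).1 (h i).2 i

end Invertibility

lemma diagonal_mul_eq_mul_diagonal_of_apply_ne_zero {ι R : Type*} [Fintype ι] [DecidableEq ι]
    [CommSemiring R] {d d' : ι → R} {M : Matrix ι ι R} (h : ∀ p r, M p r ≠ 0 → d p = d' r) :
    diagonal d * M = M * diagonal d' := by
  ext p r
  rw [diagonal_mul, mul_diagonal]
  by_cases hM : M p r = 0
  · simp [hM]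
  · rw [h p r hM, mul_comm]

section Weights

variable {K : Type*} [Field K]

def spinWeight (u : K) (ε : Fin 2) : K := if ε = 0 then u⁻¹ else u

def siteWeight (u : K) {N : ℕ} (s : Fin N → Fin 2) : K := ∏ j, spinWeight u (s j)

def auxWeight (u : K) {n : ℕ} (p : Fin 2 × (Fin (n + 1) → Fin 2)) : K :=
  spinWeight u p.1 * siteWeight u (Fin.init p.2)

variable {n : ℕ} (u q η : K)

lemma commute_diagonal_auxWeight_Laux (i : Fin n) :
    Commute (diagonal (auxWeight u)) (Laux (n + 1) q η i.castSucc) := by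
  refine diagonal_mul_eq_mul_diagonal_of_apply_ne_zero fun p r h => ?_
  obtain ⟨hoff, hsite⟩ := Laux_apply_ne_zero h
  have hrest : ∏ j ∈ Finset.univ.erase i, spinWeight u (p.2 j.castSucc)
      = ∏ j ∈ Finset.univ.erase i, spinWeight u (r.2 j.castSucc) :=
    Finset.prod_congr rfl fun j hj => by
      rw [hoff _ ((Fin.castSucc_injective n).ne (Finset.ne_of_mem_erase hj))]
  simp only [auxWeight, siteWeight, Fin.init, ← Finset.mul_prod_erase _ _ (Finset.mem_univ i),
    hrest]
  rcases hsite with ⟨h₁, h₂⟩ | ⟨h₁, h₂⟩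
  · rw [h₁, h₂]
  · rw [h₁, h₂]; ring

lemma diagonal_siteWeight_mul_Laux_last :
    diagonal (fun p : Fin 2 × (Fin (n + 1) → Fin 2) => siteWeight u p.2) *
        Laux (n + 1) q 1 (Fin.last n)
      = Laux (n + 1) q 1 (Fin.last n) * diagonal (auxWeight u) := by
  refine diagonal_mul_eq_mul_diagonal_of_apply_ne_zero fun p r h => ?_
  obtain ⟨hoff, h₁, h₂⟩ := Laux_one_apply_ne_zero h
  rw [siteWeight, Fin.prod_univ_castSucc, auxWeight, siteWeight, h₂, mul_comm]
  congr 1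
  exact Finset.prod_congr rfl fun j _ => by rw [hoff _ (Fin.castSucc_ne_last j)]; rfl

lemma mono_succ (ζ : K) (ξ : Fin (n + 1) → K) :
    mono (n + 1) q ζ ξ = Laux (n + 1) q (ζ / ξ (Fin.last n)) (Fin.last n) *
      ((List.finRange n).reverse.map
        fun i => Laux (n + 1) q (ζ / ξ i.castSucc) i.castSucc).prod := by
  simp [mono, List.finRange_succ_last, List.map_reverse, Function.comp_def]

lemma diagonal_siteWeight_mul_mono {ξ : Fin (n + 1) → K} (hξ : ξ (Fin.last n) ≠ 0) :
    diagonal (fun p : Fin 2 × (Fin (n + 1) → Fin 2) => siteWeight u p.2) *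
        mono (n + 1) q (ξ (Fin.last n)) ξ
      = mono (n + 1) q (ξ (Fin.last n)) ξ * diagonal (auxWeight u) := by
  have hcomm : Commute (diagonal (auxWeight u)) ((List.finRange n).reverse.map
      fun i => Laux (n + 1) q (ξ (Fin.last n) / ξ i.castSucc) i.castSucc).prod :=
    Commute.list_prod_right _ _ fun L hL => by
      obtain ⟨i, -, rfl⟩ := List.mem_map.mp hL
      exact commute_diagonal_auxWeight_Laux u q (ξ (Fin.last n) / ξ i.castSucc) i
  rw [mono_succ, div_self hξ, ← mul_assoc, diagonal_siteWeight_mul_Laux_last, mul_assoc,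
    hcomm.eq, mul_assoc]

end Weights

section Trace

variable {K : Type*} [Field K]

lemma trace_mul_conj_of_mul_eq {ι : Type*} [Fintype ι] [DecidableEq ι] {D D' S : Matrix ι ι K}
    (hS : IsUnit S) (h : D * S = S * D') (A : Matrix ι ι K) :
    trace (D * (S * A * S⁻¹)) = trace (D' * A) := by
  rw [← trace_conj hS (D' * A), ← mul_assoc, ← mul_assoc, ← mul_assoc, h, mul_assoc S]

lemma trace_diagonal_mul_ptr {N : ℕ} (d : (Fin N → Fin 2) → K)
    (M : Matrix (Fin 2 × (Fin N → Fin 2)) (Fin 2 × (Fin N → Fin 2)) K) :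
    trace (diagonal d * ptr N M) = trace (diagonal (fun p => d p.2) * M) := by
  simp only [trace, diag, diagonal_mul, ptr, of_apply, Finset.mul_sum, Fintype.sum_prod_type]
  exact Finset.sum_comm

lemma trace_diagonal_auxWeight_mul_auxTwist {n : ℕ} (u w : K)
    (Y : Matrix (Fin (n + 1) → Fin 2) (Fin (n + 1) → Fin 2) K) :
    trace (diagonal (auxWeight u) * auxTwist (n + 1) w Y)
      = (u⁻¹ * w + u * w⁻¹) * ∑ s, siteWeight u (Fin.init s) * Y s s := by
  simp only [trace, diag, diagonal_mul, auxTwist, auxWeight, spinWeight, of_apply,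
    Fintype.sum_prod_type, Fin.sum_univ_two, Finset.mul_sum, ← Finset.sum_add_distrib]
  refine Finset.sum_congr rfl fun s _ => ?_
  simp only [↓reduceIte, Fin.isValue, one_ne_zero]
  ring

end Trace

lemma Fin.sum_init_mul_last {R α : Type*} [CommSemiring R] [Fintype α] {N : ℕ}
    (F : (Fin N → α) → R) (g : α → R) :
    ∑ s : Fin (N + 1) → α, F (Fin.init s) * g (s (Fin.last N)) = (∑ s, F s) * ∑ a, g a := by
  rw [Fintype.sum_equiv (Fin.snocEquiv fun _ => α).symm
    (fun s => F (Fin.init s) * g (s (Fin.last N))) (fun p => F p.2 * g p.1) fun _ => rfl,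
    Fintype.sum_prod_type, Finset.sum_mul_sum, Finset.sum_comm]

section Embedding

variable {K : Type*} [Field K] {m : ℕ}

lemma embed_self (h : m ≤ m) (X : Matrix (Fin m → Fin 2) (Fin m → Fin 2) K) :
    embed m m h X = X := by
  ext s s'
  simp [embed, Fin.castLE_refl]

lemma embed_succ_apply_self {N : ℕ} (h : m ≤ N) (h' : m ≤ N + 1)
    (X : Matrix (Fin m → Fin 2) (Fin m → Fin 2) K) (s : Fin (N + 1) → Fin 2) :
    embed m (N + 1) h' X s s = embed m N h X (Fin.init s) (Fin.init s) := by
  simp only [embed, of_apply, implies_true, ↓reduceIte]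
  rfl

lemma wtr_eq_trace (N : ℕ) (u : K) (Y : Matrix (Fin N → Fin 2) (Fin N → Fin 2) K) :
    wtr N u Y = trace (diagonal (siteWeight u) * Y) / (u + u⁻¹) ^ N :=
  rfl

lemma trace_diagonal_siteWeight_mul_embed_succ {N : ℕ} (u : K) (h : m ≤ N) (h' : m ≤ N + 1)
    (X : Matrix (Fin m → Fin 2) (Fin m → Fin 2) K) :
    trace (diagonal (siteWeight u) * embed m (N + 1) h' X)
      = trace (diagonal (siteWeight u) * embed m N h X) * (u⁻¹ + u) := by
  have hsplit : ∀ s : Fin (N + 1) → Fin 2, siteWeight u s * embed m (N + 1) h' X s s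
      = siteWeight u (Fin.init s) * embed m N h X (Fin.init s) (Fin.init s) *
          spinWeight u (s (Fin.last N)) := fun s => by
    rw [embed_succ_apply_self h h', siteWeight, Fin.prod_univ_castSucc, mul_right_comm]
    rfl
  simp only [trace, diag, diagonal_mul, hsplit]
  rw [Fin.sum_init_mul_last (fun t => siteWeight u t * embed m N h X t t)]
  simp [spinWeight]

lemma wtr_embed {u : K} (hu : u + u⁻¹ ≠ 0) {N : ℕ} (h : m ≤ N)
    (X : Matrix (Fin m → Fin 2) (Fin m → Fin 2) K) : wtr N u (embed m N h X) = wtr m u X := by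
  induction N, h using Nat.le_induction with
  | base => rw [embed_self]
  | succ N hmN ih =>
    rw [← ih, wtr_eq_trace, wtr_eq_trace,
      trace_diagonal_siteWeight_mul_embed_succ u hmN, add_comm u⁻¹, pow_succ,
      mul_div_mul_right _ _ hu]

end Embedding

theorem ttm_weighted_trace_general {K : Type*} [Field K] (n m : ℕ) (hmn : m ≤ n)
    (q w u : K) (hq : q ≠ 0) (hq2 : q ^ 2 ≠ 1)
    (hu : u ≠ 0) (hu2 : 1 + u ^ 2 ≠ 0)
    (ξ : Fin (n + 1) → K) (hξ : ∀ i, ξ i ≠ 0)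
    (hr : ∀ i, i ≠ Fin.last n →
      (ξ (Fin.last n) / ξ i) ^ 2 ≠ q ^ 2 ∧ (ξ (Fin.last n) / ξ i) ^ 2 ≠ (q ^ 2)⁻¹)
    (X : Matrix (Fin m → Fin 2) (Fin m → Fin 2) K) :
    wtr (n + 1) u
        (ttm (n + 1) q (ξ (Fin.last n)) w ξ (embed m (n + 1) (Nat.le_succ_of_le hmn) X))
      = 2 * (w + u ^ 2 * w⁻¹) / (1 + u ^ 2) * wtr m u X := by
  have hu' : u * u⁻¹ = 1 := mul_inv_cancel₀ hu
  have hv : u + u⁻¹ = (1 + u ^ 2) * u⁻¹ := by linear_combination (-u) * hu'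
  have htwist : u⁻¹ * w + u * w⁻¹ = (w + u ^ 2 * w⁻¹) * u⁻¹ := by
    linear_combination (-(u * w⁻¹)) * hu'
  have hv0 : u + u⁻¹ ≠ 0 := hv ▸ mul_ne_zero hu2 (inv_ne_zero hu)
  have hS : IsUnit (mono (n + 1) q (ξ (Fin.last n)) ξ) := by
    refine isUnit_mono hq (hξ _) hξ fun i => ?_
    by_cases hi : i = Fin.last n
    · rw [hi, div_self (hξ _), one_pow]
      exact ⟨Ne.symm hq2, by simpa [eq_comm] using hq2⟩
    · exact hr i hi
  have hlast : ∑ s, siteWeight u (Fin.init s) *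
      embed m (n + 1) (Nat.le_succ_of_le hmn) X s s
        = trace (diagonal (siteWeight u) * embed m n hmn X) * 2 := by
    simpa [embed_succ_apply_self hmn, trace, diagonal_mul] using
      Fin.sum_init_mul_last (fun t => siteWeight u t * embed m n hmn X t t) fun _ => (1 : K)
  rw [wtr_eq_trace, ttm, trace_diagonal_mul_ptr,
    trace_mul_conj_of_mul_eq hS (diagonal_siteWeight_mul_mono u q (hξ _)),
    trace_diagonal_auxWeight_mul_auxTwist, hlast, ← wtr_embed hv0 hmn X, wtr_eq_trace,
    htwist, div_mul_div_comm,
    div_eq_div_iff (pow_ne_zero _ hv0) (mul_ne_zero hu2 (pow_ne_zero _ hv0)), hv]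
  ring

/-- Weighted trace of the twisted transfer matrix evaluated at the last inhomogeneity:
`tr^κ_n( 𝐭*(ξ_n)(X ⊗ id) ) = 2·(w + u²·w⁻¹)/(1 + u²) · tr^κ_m(X)`. Here the chain has
`n+1` sites, `X` acts on the first `m` sites with `1 ≤ m < n+1`. -/
theorem ttm_weighted_trace {K : Type*} [Field K] (n m : ℕ) (hm : 1 ≤ m) (hmn : m ≤ n)
    (q w u : K) (hq : q ≠ 0) (hq2 : q ^ 2 ≠ 1) (hw : w ≠ 0)
    (hu : u ≠ 0) (hu2 : 1 + u ^ 2 ≠ 0)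
    (ξ : Fin (n + 1) → K) (hξ : ∀ i, ξ i ≠ 0)
    (hr : ∀ i, i ≠ Fin.last n →
      (ξ (Fin.last n) / ξ i) ^ 2 ≠ q ^ 2 ∧ (ξ (Fin.last n) / ξ i) ^ 2 ≠ (q ^ 2)⁻¹)
    (X : Matrix (Fin m → Fin 2) (Fin m → Fin 2) K) :
    wtr (n + 1) u
        (ttm (n + 1) q (ξ (Fin.last n)) w ξ (embed m (n + 1) (Nat.le_succ_of_le hmn) X))
      = 2 * (w + u ^ 2 * w⁻¹) / (1 + u ^ 2) * wtr m u X :=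
  ttm_weighted_trace_general n m hmn q w u hq hq2 hu hu2 ξ hξ hr X
end
end

section
/- Bazhanov–Lukyanov–Zamolodchikov bases: (i) the vectors e_{j,p} = U(ζ)^j · a_B^p (|0⟩ ⊗ |−1⟩), j,p ≥ 0, form a K-basis of W⁺ ⊗ W⁻; (ii) if in addition ζ² ≠ q^{2n} for every integer n, then the vectors f_{j,p} = ((1 − ζq⁻²·Z'(ζ⁻¹))·a_B)^j · (V'(ζ⁻¹))^p (|−1⟩ ⊗ |0⟩), j,p ≥ 0, form a K-basis of W⁻ ⊗ W⁺. -/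
noncomputable section

/- We model a tensor product `W ⊗ W'` of two spaces with bases indexed by `ℕ` as the
space of finitely supported functions `(ℕ × ℕ) →₀ K`; `eb k l` is the basis vector
indexed by `(k, l)`. For the factor `W⁺` the index `k` labels the state `|k⟩`
(`k ≥ 0`), and for the factor `W⁻` the index `m` labels the state `|−1−m⟩`. -/

/-- The basis vector indexed by `(k, l)`. -/
def eb {K : Type*} [Field K] (k l : ℕ) : (ℕ × ℕ) →₀ K := Finsupp.single (k, l) 1

/-- The endomorphism of `(ℕ × ℕ) →₀ K` determined by prescribed images of the basis
vectors. -/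
def opOf {K : Type*} [Field K] (g : ℕ × ℕ → ((ℕ × ℕ) →₀ K)) :
    Module.End K ((ℕ × ℕ) →₀ K) :=
  Finsupp.lsum K fun p => LinearMap.toSpanSingleton K ((ℕ × ℕ) →₀ K) (g p)

namespace WpWm  -- `W⁺ ⊗ W⁻`: first index plus-type (label A), second minus-type (label B)

variable {K : Type*} [Field K]

/-- `a_A`: `a|k⟩ = (1 − q^{2k})|k−1⟩` on the first factor. -/
def aA (q : K) : Module.End K ((ℕ × ℕ) →₀ K) :=
  opOf fun p => (1 - q ^ (2 * p.1)) • eb (p.1 - 1) p.2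

/-- `a*_A`: `a*|k⟩ = |k+1⟩` on the first factor. -/
def aAs {K : Type*} [Field K] : Module.End K ((ℕ × ℕ) →₀ K) :=
  opOf fun p => eb (p.1 + 1) p.2

/-- `d_A = q^{D_A}`: `d|k⟩ = q^k|k⟩` on the first factor. -/
def dA (q : K) : Module.End K ((ℕ × ℕ) →₀ K) :=
  opOf fun p => q ^ p.1 • eb p.1 p.2

/-- `d_A⁻¹`. -/
def dAi (q : K) : Module.End K ((ℕ × ℕ) →₀ K) :=
  opOf fun p => (q ^ p.1)⁻¹ • eb p.1 p.2

/-- `a_B`: `a|−1−m⟩ = (1 − q^{−2−2m})|−2−m⟩` on the second factor. -/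
def aB (q : K) : Module.End K ((ℕ × ℕ) →₀ K) :=
  opOf fun p => (1 - (q ^ (2 * p.2 + 2))⁻¹) • eb p.1 (p.2 + 1)

/-- `a*_B`: `a*|−1−m⟩ = |−m⟩`, with `a*|−1⟩ = 0`, on the second factor. -/
def aBs {K : Type*} [Field K] : Module.End K ((ℕ × ℕ) →₀ K) :=
  opOf fun p => if p.2 = 0 then 0 else eb p.1 (p.2 - 1)

/-- `d_B = q^{D_B}`: `d|−1−m⟩ = q^{−1−m}|−1−m⟩` on the second factor. -/
def dB (q : K) : Module.End K ((ℕ × ℕ) →₀ K) :=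
  opOf fun p => (q ^ (p.2 + 1))⁻¹ • eb p.1 p.2

/-- `d_B⁻¹`. -/
def dBi (q : K) : Module.End K ((ℕ × ℕ) →₀ K) :=
  opOf fun p => q ^ (p.2 + 1) • eb p.1 p.2

/-- `U(ζ) = ζ·a*_A + a_B·d_A²`. -/
def Uop (q ζ : K) : Module.End K ((ℕ × ℕ) →₀ K) := ζ • aAs + aB q * dA q ^ 2

/-- `V(ζ) = ζ·a*_B + a_A·d_B²`. -/
def Vop (q ζ : K) : Module.End K ((ℕ × ℕ) →₀ K) := ζ • aBs + aA q * dB q ^ 2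

/-- `Y(ζ) = (ζq² − a_A·a_B)·d_A²`. -/
def Yop (q ζ : K) : Module.End K ((ℕ × ℕ) →₀ K) :=
  (ζ * q ^ 2) • dA q ^ 2 - aA q * aB q * dA q ^ 2

/-- `Z(ζ) = ζ⁻¹q²·d_B² − a*_A·a*_B·d_A⁻²`. -/
def Zop (q ζ : K) : Module.End K ((ℕ × ℕ) →₀ K) :=
  (ζ⁻¹ * q ^ 2) • dB q ^ 2 - aAs * aBs * dAi q ^ 2

/-- `e_{j,p} = U(ζ)^j · a_B^p (|0⟩ ⊗ |−1⟩)`. -/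
def evec (q ζ : K) (j p : ℕ) : (ℕ × ℕ) →₀ K :=
  ((Uop q ζ) ^ j * (aB q) ^ p) (eb 0 0)

end WpWm

namespace WmWp  -- `W⁻ ⊗ W⁺`: first index minus-type (label B), second plus-type (label A)

variable {K : Type*} [Field K]

/-- `a_B` on the first factor. -/
def aB (q : K) : Module.End K ((ℕ × ℕ) →₀ K) :=
  opOf fun p => (1 - (q ^ (2 * p.1 + 2))⁻¹) • eb (p.1 + 1) p.2

/-- `a*_B` on the first factor (`a*|−1⟩ = 0`). -/
def aBs {K : Type*} [Field K] : Module.End K ((ℕ × ℕ) →₀ K) :=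
  opOf fun p => if p.1 = 0 then 0 else eb (p.1 - 1) p.2

/-- `d_B` on the first factor. -/
def dB (q : K) : Module.End K ((ℕ × ℕ) →₀ K) :=
  opOf fun p => (q ^ (p.1 + 1))⁻¹ • eb p.1 p.2

/-- `d_B⁻¹` on the first factor. -/
def dBi (q : K) : Module.End K ((ℕ × ℕ) →₀ K) :=
  opOf fun p => q ^ (p.1 + 1) • eb p.1 p.2

/-- `a_A` on the second factor. -/
def aA (q : K) : Module.End K ((ℕ × ℕ) →₀ K) :=
  opOf fun p => (1 - q ^ (2 * p.2)) • eb p.1 (p.2 - 1)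

/-- `a*_A` on the second factor. -/
def aAs {K : Type*} [Field K] : Module.End K ((ℕ × ℕ) →₀ K) :=
  opOf fun p => eb p.1 (p.2 + 1)

/-- `d_A` on the second factor. -/
def dA (q : K) : Module.End K ((ℕ × ℕ) →₀ K) :=
  opOf fun p => q ^ p.2 • eb p.1 p.2

/-- `d_A⁻¹` on the second factor. -/
def dAi (q : K) : Module.End K ((ℕ × ℕ) →₀ K) :=
  opOf fun p => (q ^ p.2)⁻¹ • eb p.1 p.2

/-- `U'(η) = η·a*_B + a_A·d_B²`. -/
def Uop (q η : K) : Module.End K ((ℕ × ℕ) →₀ K) := η • aBs + aA q * dB q ^ 2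

/-- `V'(η) = η·a*_A + a_B·d_A²`. -/
def Vop (q η : K) : Module.End K ((ℕ × ℕ) →₀ K) := η • aAs + aB q * dA q ^ 2

/-- `Y'(η) = (ηq² − a_B·a_A)·d_B²`. -/
def Yop (q η : K) : Module.End K ((ℕ × ℕ) →₀ K) :=
  (η * q ^ 2) • dB q ^ 2 - aB q * aA q * dB q ^ 2

/-- `Z'(η) = η⁻¹q²·d_A² − a*_B·a*_A·d_B⁻²`. -/
def Zop (q η : K) : Module.End K ((ℕ × ℕ) →₀ K) :=
  (η⁻¹ * q ^ 2) • dA q ^ 2 - aBs * aAs * dBi q ^ 2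

/-- `f_{j,p} = ((1 − ζq⁻²·Z'(ζ⁻¹))·a_B)^j · (V'(ζ⁻¹))^p (|−1⟩ ⊗ |0⟩)`. -/
def fvec (q ζ : K) (j p : ℕ) : (ℕ × ℕ) →₀ K :=
  (((1 - (ζ * (q ^ 2)⁻¹) • Zop q ζ⁻¹) * aB q) ^ j * (Vop q ζ⁻¹) ^ p) (eb 0 0)

end WmWp

/-
Grade `(ℕ × ℕ) →₀ K` by the total degree `a + b` of `eb a b`, so that the degree-`n` piece has
dimension `n + 1`. In both cases the two commuting operators `P`, `Q` (`U(ζ)` and `a_B` for the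
`e_{j,p}`; `(1 − ζq⁻²Z'(ζ⁻¹))a_B` and `V'(ζ⁻¹)` for the `f_{j,p}`) send `eb a b` to combinations
of `eb (a+1) b` and `eb a (b+1)` through an invertible 2 × 2 matrix, so the degree-`(n+1)` piece
is `P(deg n) + Q(deg n)`. Induction on `n` then shows that the `n + 1` vectors
`P^j Q^p (eb 0 0)` with `j + p = n` span the degree-`n` piece, hence form a basis of it.
The determinants are `ζ(1 − q^{−2b−2})` and `ζ⁻¹(1 − q^{−2m−2})(1 − ζ²q^{2(m+k+1)})`; the last
factor is where `ζ² ∉ q^{2ℤ}` enters.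
-/

open Finset.HasAntidiagonal (antidiagonal mem_antidiagonal)

section LinearIndependence

theorem linearIndependent_sigma_of_mem_supported {R M α η : Type*} [Ring R] [AddCommGroup M]
    [Module R M] {ιs : η → Type*} {s : η → Set α} (hs : Pairwise fun i j => Disjoint (s i) (s j))
    {f : ∀ j, ιs j → α →₀ M} (hindep : ∀ j, LinearIndependent R (f j))
    (hsupp : ∀ j i, f j i ∈ Finsupp.supported M R (s j)) :
    LinearIndependent R fun ji : Σ j, ιs j => f ji.1 ji.2 := by
  refine linearIndependent_iUnion_finite hindep fun i t _ hit => ?_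
  have hdisj : Disjoint (s i) (⋃ j ∈ t, s j) :=
    Set.disjoint_iUnion₂_right.2 fun j hj => hs (ne_of_mem_of_not_mem hj hit).symm
  refine (Finsupp.disjoint_supported_supported hdisj).mono
    (Submodule.span_le.2 (Set.range_subset_iff.2 (hsupp i))) (iSup₂_le fun j hj => ?_)
  exact Submodule.span_le.2 (Set.range_subset_iff.2 fun x =>
    Finsupp.supported_mono (Set.subset_biUnion_of_mem hj) (hsupp j x))

theorem linearIndependent_of_supported_le_span {K α ι : Type*} [Field K] [Fintype ι]
    {s : Finset α} {v : ι → α →₀ K} (hcard : Fintype.card ι = s.card)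
    (hspan : Finsupp.supported K K (s : Set α) ≤ Submodule.span K (Set.range v)) :
    LinearIndependent K v := by
  have := FiniteDimensional.span_of_finite K (Set.finite_range v)
  rw [linearIndependent_iff_card_eq_finrank_span]
  refine le_antisymm ?_ (finrank_range_le_card v)
  calc Fintype.card ι = s.card := hcard
    _ = Module.finrank K (Finsupp.supported K K (s : Set α)) := by
      rw [(Finsupp.supportedEquivFinsupp (M := K) (R := K) (s : Set α)).finrank_eq]
      simp
    _ ≤ (Set.range v).finrank K := Submodule.finrank_mono hspan

theorem Submodule.mem_and_mem_of_det_ne_zero {K M : Type*} [Field K] [AddCommGroup M]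
    [Module K M] {W : Submodule K M} {u v x y : M} {a b c d : K} (hu : u ∈ W) (hv : v ∈ W)
    (hux : u = a • x + b • y) (hvx : v = c • x + d • y) (hdet : a * d - b * c ≠ 0) :
    x ∈ W ∧ y ∈ W := by
  have hx : (a * d - b * c) • x = d • u - b • v := by rw [hux, hvx]; module
  have hy : (a * d - b * c) • y = a • v - c • u := by rw [hux, hvx]; module
  exact ⟨(W.smul_mem_iff hdet).1 (hx ▸ W.sub_mem (W.smul_mem d hu) (W.smul_mem b hv)),
    (W.smul_mem_iff hdet).1 (hy ▸ W.sub_mem (W.smul_mem a hv) (W.smul_mem c hu))⟩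

end LinearIndependence

section Grading

variable {K : Type*} [Field K]

theorem opOf_eb (g : ℕ × ℕ → ((ℕ × ℕ) →₀ K)) (a b : ℕ) : opOf g (eb a b) = g (a, b) := by
  simp [opOf, eb]

theorem lhom_ext_eb {f g : Module.End K ((ℕ × ℕ) →₀ K)} (h : ∀ a b, f (eb a b) = g (eb a b)) :
    f = g :=
  Finsupp.basisSingleOne.ext fun x => by simpa [eb] using h x.1 x.2

variable (K) in
def degreePiece (n : ℕ) : Submodule K ((ℕ × ℕ) →₀ K) :=
  Finsupp.supported K K (antidiagonal n : Set (ℕ × ℕ))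

theorem eb_mem_degreePiece {a b n : ℕ} (h : a + b = n) :
    (eb a b : (ℕ × ℕ) →₀ K) ∈ degreePiece K n :=
  Finsupp.single_mem_supported K 1 (mem_antidiagonal.2 h)

theorem degreePiece_eq_span (n : ℕ) :
    degreePiece K n = Submodule.span K ((fun x : ℕ × ℕ => eb x.1 x.2) '' antidiagonal n) :=
  Finsupp.supported_eq_span_single K _

variable {P Q : Module.End K ((ℕ × ℕ) →₀ K)} {p₁ p₂ q₁ q₂ : ℕ → ℕ → K}

theorem map_degreePiece_le (hP : ∀ a b, P (eb a b) = p₁ a b • eb (a + 1) b + p₂ a b • eb a (b + 1))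
    (n : ℕ) : (degreePiece K n).map P ≤ degreePiece K (n + 1) := by
  rw [degreePiece_eq_span, Submodule.map_span_le]
  rintro _ ⟨⟨a, b⟩, hab, rfl⟩
  rw [Finset.mem_coe, mem_antidiagonal] at hab
  rw [hP]
  exact add_mem (Submodule.smul_mem _ _ (eb_mem_degreePiece (by omega)))
    (Submodule.smul_mem _ _ (eb_mem_degreePiece (by omega)))

theorem pow_apply_mem_degreePiece
    (hP : ∀ a b, P (eb a b) = p₁ a b • eb (a + 1) b + p₂ a b • eb a (b + 1))
    {n : ℕ} {v : (ℕ × ℕ) →₀ K} (hv : v ∈ degreePiece K n) (j : ℕ) :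
    (P ^ j) v ∈ degreePiece K (n + j) := by
  induction j with
  | zero => simpa using hv
  | succ j ih =>
    rw [pow_succ', Module.End.mul_apply]
    exact map_degreePiece_le hP _ (Submodule.mem_map_of_mem ih)

theorem degreePiece_succ_le
    (hP : ∀ a b, P (eb a b) = p₁ a b • eb (a + 1) b + p₂ a b • eb a (b + 1))
    (hQ : ∀ a b, Q (eb a b) = q₁ a b • eb (a + 1) b + q₂ a b • eb a (b + 1))
    (hdet : ∀ a b, p₁ a b * q₂ a b - p₂ a b * q₁ a b ≠ 0) (n : ℕ) :
    degreePiece K (n + 1) ≤ (degreePiece K n).map P ⊔ (degreePiece K n).map Q := by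
  set W := (degreePiece K n).map P ⊔ (degreePiece K n).map Q
  have hnbr : ∀ a b, a + b = n → eb (a + 1) b ∈ W ∧ eb a (b + 1) ∈ W := fun a b hab =>
    Submodule.mem_and_mem_of_det_ne_zero
      (Submodule.mem_sup_left (Submodule.mem_map_of_mem (eb_mem_degreePiece hab)))
      (Submodule.mem_sup_right (Submodule.mem_map_of_mem (eb_mem_degreePiece hab)))
      (hP a b) (hQ a b) (hdet a b)
  rw [degreePiece_eq_span, Submodule.span_le]
  rintro _ ⟨⟨a, b⟩, hab, rfl⟩
  rw [Finset.mem_coe, mem_antidiagonal] at hab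
  rcases a with _ | a
  · obtain rfl : b = n + 1 := by omega
    exact (hnbr 0 n (zero_add n)).2
  · exact (hnbr a b (by omega)).1

theorem degreePiece_le_span_pow_mul_pow (hPQ : Commute P Q)
    (hcov : ∀ n, degreePiece K (n + 1) ≤ (degreePiece K n).map P ⊔ (degreePiece K n).map Q)
    (n : ℕ) : degreePiece K n ≤
      Submodule.span K ((fun x : ℕ × ℕ => (P ^ x.1 * Q ^ x.2) (eb 0 0)) '' antidiagonal n) := by
  set g := fun x : ℕ × ℕ => (P ^ x.1 * Q ^ x.2) (eb 0 0)
  have hPg : ∀ n, P '' (g '' antidiagonal n) ⊆ g '' antidiagonal (n + 1) := by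
    rintro n _ ⟨_, ⟨⟨j, p⟩, hjp, rfl⟩, rfl⟩
    refine ⟨(j + 1, p), ?_, ?_⟩
    · rw [Finset.mem_coe, mem_antidiagonal] at hjp ⊢
      omega
    · show (P ^ (j + 1) * Q ^ p) (eb 0 0) = P ((P ^ j * Q ^ p) (eb 0 0))
      rw [pow_succ', mul_assoc]
      rfl
  have hQg : ∀ n, Q '' (g '' antidiagonal n) ⊆ g '' antidiagonal (n + 1) := by
    rintro n _ ⟨_, ⟨⟨j, p⟩, hjp, rfl⟩, rfl⟩
    refine ⟨(j, p + 1), ?_, ?_⟩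
    · rw [Finset.mem_coe, mem_antidiagonal] at hjp ⊢
      omega
    · show (P ^ j * Q ^ (p + 1)) (eb 0 0) = Q ((P ^ j * Q ^ p) (eb 0 0))
      rw [pow_succ', ← mul_assoc, (hPQ.pow_left j).eq, mul_assoc]
      rfl
  induction n with
  | zero =>
    rw [degreePiece_eq_span]
    exact Submodule.span_mono (by simp [g])
  | succ n ih =>
    refine (hcov n).trans (sup_le ?_ ?_)
    · exact (Submodule.map_mono ih).trans
        ((Submodule.map_span P _).trans_le (Submodule.span_mono (hPg n)))
    · exact (Submodule.map_mono ih).trans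
        ((Submodule.map_span Q _).trans_le (Submodule.span_mono (hQg n)))

theorem linearIndependent_pow_mul_pow_and_span_eq_top (hPQ : Commute P Q)
    (hP : ∀ a b, P (eb a b) = p₁ a b • eb (a + 1) b + p₂ a b • eb a (b + 1))
    (hQ : ∀ a b, Q (eb a b) = q₁ a b • eb (a + 1) b + q₂ a b • eb a (b + 1))
    (hdet : ∀ a b, p₁ a b * q₂ a b - p₂ a b * q₁ a b ≠ 0) :
    LinearIndependent K (fun x : ℕ × ℕ => (P ^ x.1 * Q ^ x.2) (eb 0 0)) ∧
      Submodule.span K (Set.range fun x : ℕ × ℕ => (P ^ x.1 * Q ^ x.2) (eb 0 0)) = ⊤ := by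
  set g := fun x : ℕ × ℕ => (P ^ x.1 * Q ^ x.2) (eb 0 0)
  have hspan := degreePiece_le_span_pow_mul_pow hPQ (degreePiece_succ_le hP hQ hdet)
  have hdeg : ∀ n (x : antidiagonal n), g x ∈ degreePiece K n := fun n ⟨⟨j, p⟩, hjp⟩ => by
    have := pow_apply_mem_degreePiece hP
      (pow_apply_mem_degreePiece hQ (eb_mem_degreePiece (zero_add 0)) p) j
    rwa [zero_add, add_comm, mem_antidiagonal.1 hjp] at this
  constructor
  · refine (linearIndependent_equiv' (g := fun x : Σ n, antidiagonal n => g x.2)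
      Finset.HasAntidiagonal.sigmaAntidiagonalEquivProd rfl).1 ?_
    refine linearIndependent_sigma_of_mem_supported (f := fun n (x : antidiagonal n) => g x)
      (s := fun n => ((antidiagonal n : Finset (ℕ × ℕ)) : Set (ℕ × ℕ)))
      (fun i j hij => ?_) (fun n => ?_) hdeg
    · exact Finset.disjoint_coe.2 (Finset.disjoint_left.2 fun x hi hj =>
        hij ((mem_antidiagonal.1 hi).symm.trans (mem_antidiagonal.1 hj)))
    · refine linearIndependent_of_supported_le_span (Fintype.card_coe _) ?_
      have := hspan n
      rwa [Set.image_eq_range] at this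
  · rw [eq_top_iff, ← Finsupp.supported_univ, Finsupp.supported_eq_span_single,
      Submodule.span_le]
    rintro _ ⟨⟨a, b⟩, -, rfl⟩
    exact Submodule.span_mono (Set.image_subset_range _ _)
      (hspan (a + b) (eb_mem_degreePiece rfl))

end Grading

namespace WpWm

variable {K : Type*} [Field K]

theorem aAs_eb (a b : ℕ) : (aAs : Module.End K ((ℕ × ℕ) →₀ K)) (eb a b) = eb (a + 1) b :=
  opOf_eb _ a b

theorem aB_eb (q : K) (a b : ℕ) :
    aB q (eb a b) = (0 : K) • eb (a + 1) b + (1 - (q ^ (2 * b + 2))⁻¹) • eb a (b + 1) := by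
  rw [zero_smul, zero_add]
  exact opOf_eb _ a b

theorem dA_sq_eb (q : K) (a b : ℕ) : (dA q ^ 2) (eb a b) = q ^ (2 * a) • eb a b := by
  rw [sq, Module.End.mul_apply, dA, opOf_eb, map_smul, opOf_eb, smul_smul, ← pow_add, two_mul]

theorem Uop_eb (q ζ : K) (a b : ℕ) :
    Uop q ζ (eb a b) = ζ • eb (a + 1) b +
      (q ^ (2 * a) * (1 - (q ^ (2 * b + 2))⁻¹)) • eb a (b + 1) := by
  rw [Uop, LinearMap.add_apply, LinearMap.smul_apply, aAs_eb, Module.End.mul_apply,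
    dA_sq_eb, map_smul, aB_eb, zero_smul, zero_add, smul_smul, mul_comm]

theorem commute_Uop_aB (q ζ : K) : Commute (Uop q ζ) (aB q) := by
  refine lhom_ext_eb fun a b => ?_
  simp only [Module.End.mul_apply, Uop_eb, aB_eb, map_add, map_smul, smul_smul, zero_smul,
    zero_add]
  match_scalars <;> ring

theorem linearIndependent_evec_and_span_eq_top {q ζ : K} (hq' : ∀ n : ℕ, 0 < n → q ^ n ≠ 1)
    (hζ : ζ ≠ 0) :
    LinearIndependent K (fun jp : ℕ × ℕ => evec q ζ jp.1 jp.2) ∧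
      Submodule.span K (Set.range fun jp : ℕ × ℕ => evec q ζ jp.1 jp.2) = ⊤ := by
  refine linearIndependent_pow_mul_pow_and_span_eq_top (commute_Uop_aB q ζ) (Uop_eb q ζ)
    (aB_eb q) fun _ b => ?_
  rw [mul_zero, sub_zero]
  exact mul_ne_zero hζ (sub_ne_zero.2 (inv_ne_one.2 (hq' _ (Nat.succ_pos _))).symm)

end WpWm

theorem one_sub_sq_mul_pow_ne_zero {K : Type*} [Field K] {q ζ : K}
    (hζq : ∀ n : ℤ, ζ ^ 2 ≠ q ^ (2 * n)) (i : ℕ) : 1 - ζ ^ 2 * q ^ (2 * i) ≠ 0 := by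
  refine sub_ne_zero.2 fun h => hζq (-i) ?_
  rw [eq_inv_of_mul_eq_one_left h.symm, mul_neg, zpow_neg]
  norm_cast

namespace WmWp

variable {K : Type*} [Field K]

def dressedAB (q ζ : K) : Module.End K ((ℕ × ℕ) →₀ K) :=
  (1 - (ζ * (q ^ 2)⁻¹) • Zop q ζ⁻¹) * aB q

theorem aB_eb (q : K) (m k : ℕ) : aB q (eb m k) = (1 - (q ^ (2 * m + 2))⁻¹) • eb (m + 1) k :=
  opOf_eb _ m k

theorem aAs_eb (m k : ℕ) : (aAs : Module.End K ((ℕ × ℕ) →₀ K)) (eb m k) = eb m (k + 1) :=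
  opOf_eb _ m k

theorem aBs_eb_succ (m k : ℕ) : (aBs : Module.End K ((ℕ × ℕ) →₀ K)) (eb (m + 1) k) = eb m k :=
  (opOf_eb _ _ _).trans (if_neg m.succ_ne_zero)

theorem dA_sq_eb (q : K) (m k : ℕ) : (dA q ^ 2) (eb m k) = q ^ (2 * k) • eb m k := by
  rw [sq, Module.End.mul_apply, dA, opOf_eb, map_smul, opOf_eb, smul_smul, ← pow_add, two_mul]

theorem dBi_sq_eb (q : K) (m k : ℕ) : (dBi q ^ 2) (eb m k) = q ^ (2 * m + 2) • eb m k := by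
  rw [sq, Module.End.mul_apply, dBi, opOf_eb, map_smul, opOf_eb, smul_smul, ← pow_add]
  ring_nf

theorem Vop_eb (q η : K) (m k : ℕ) :
    Vop q η (eb m k) = (q ^ (2 * k) * (1 - (q ^ (2 * m + 2))⁻¹)) • eb (m + 1) k +
      η • eb m (k + 1) := by
  rw [Vop, LinearMap.add_apply, LinearMap.smul_apply, aAs_eb, Module.End.mul_apply, dA_sq_eb,
    map_smul, aB_eb, smul_smul, add_comm]

theorem Zop_eb_succ (q η : K) (m k : ℕ) :
    Zop q η (eb (m + 1) k) = (η⁻¹ * q ^ 2 * q ^ (2 * k)) • eb (m + 1) k -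
      q ^ (2 * (m + 1) + 2) • eb m (k + 1) := by
  rw [Zop, LinearMap.sub_apply, LinearMap.smul_apply, dA_sq_eb, smul_smul, Module.End.mul_apply,
    Module.End.mul_apply, dBi_sq_eb, map_smul, map_smul, aAs_eb, aBs_eb_succ]

theorem dressedAB_eb {q : K} (hq : q ≠ 0) (ζ : K) (m k : ℕ) :
    dressedAB q ζ (eb m k) =
      ((1 - (q ^ (2 * m + 2))⁻¹) * (1 - ζ ^ 2 * q ^ (2 * k))) • eb (m + 1) k +
        ((1 - (q ^ (2 * m + 2))⁻¹) * (ζ * q ^ (2 * m + 2))) • eb m (k + 1) := by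
  rw [dressedAB, Module.End.mul_apply, aB_eb, map_smul, LinearMap.sub_apply,
    Module.End.one_apply, LinearMap.smul_apply, Zop_eb_succ, inv_inv]
  match_scalars
  · field_simp
  · field_simp
    ring

theorem commute_dressedAB_Vop {q ζ : K} (hq : q ≠ 0) (hζ : ζ ≠ 0) :
    Commute (dressedAB q ζ) (Vop q ζ⁻¹) := by
  refine lhom_ext_eb fun m k => ?_
  simp only [Module.End.mul_apply, Vop_eb, dressedAB_eb hq, map_add, map_smul]
  match_scalars
  · field_simp
  · field_simp
    ring
  · ring

theorem linearIndependent_fvec_and_span_eq_top {q ζ : K} (hq : q ≠ 0)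
    (hq' : ∀ n : ℕ, 0 < n → q ^ n ≠ 1) (hζ : ζ ≠ 0) (hζq : ∀ n : ℤ, ζ ^ 2 ≠ q ^ (2 * n)) :
    LinearIndependent K (fun jp : ℕ × ℕ => fvec q ζ jp.1 jp.2) ∧
      Submodule.span K (Set.range fun jp : ℕ × ℕ => fvec q ζ jp.1 jp.2) = ⊤ := by
  have hα : ∀ m : ℕ, 1 - (q ^ (2 * m + 2))⁻¹ ≠ 0 := fun m =>
    sub_ne_zero.2 (inv_ne_one.2 (hq' _ (Nat.succ_pos _))).symm
  refine linearIndependent_pow_mul_pow_and_span_eq_top (commute_dressedAB_Vop hq hζ)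
    (dressedAB_eb hq ζ) (Vop_eb q ζ⁻¹) fun m k => ?_
  have hdet : (1 - (q ^ (2 * m + 2))⁻¹) * (1 - ζ ^ 2 * q ^ (2 * k)) * ζ⁻¹ -
      (1 - (q ^ (2 * m + 2))⁻¹) * (ζ * q ^ (2 * m + 2)) *
        (q ^ (2 * k) * (1 - (q ^ (2 * m + 2))⁻¹)) =
      (1 - (q ^ (2 * m + 2))⁻¹) * ζ⁻¹ * (1 - ζ ^ 2 * q ^ (2 * (m + k + 1))) := by
    field_simp
    ring
  rw [hdet]
  exact mul_ne_zero (mul_ne_zero (hα m) (inv_ne_zero hζ)) (one_sub_sq_mul_pow_ne_zero hζq _)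

end WmWp

/-- Bazhanov–Lukyanov–Zamolodchikov bases: (i) the vectors
`e_{j,p} = U(ζ)^j·a_B^p (|0⟩ ⊗ |−1⟩)` form a `K`-basis of `W⁺ ⊗ W⁻`; (ii) if moreover
`ζ² ≠ q^{2n}` for every integer `n`, the vectors
`f_{j,p} = ((1 − ζq⁻²·Z'(ζ⁻¹))·a_B)^j·(V'(ζ⁻¹))^p (|−1⟩ ⊗ |0⟩)` form a `K`-basis of
`W⁻ ⊗ W⁺`. -/
theorem BLZ_bases {K : Type*} [Field K] (q ζ : K)
    (hq : q ≠ 0) (hq' : ∀ n : ℕ, 0 < n → q ^ n ≠ 1) (hζ : ζ ≠ 0) :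
    (LinearIndependent K (fun jp : ℕ × ℕ => WpWm.evec q ζ jp.1 jp.2) ∧
      Submodule.span K (Set.range fun jp : ℕ × ℕ => WpWm.evec q ζ jp.1 jp.2) = ⊤) ∧
    ((∀ n : ℤ, ζ ^ 2 ≠ q ^ (2 * n)) →
      LinearIndependent K (fun jp : ℕ × ℕ => WmWp.fvec q ζ jp.1 jp.2) ∧
        Submodule.span K (Set.range fun jp : ℕ × ℕ => WmWp.fvec q ζ jp.1 jp.2) = ⊤) :=
  ⟨WpWm.linearIndependent_evec_and_span_eq_top hq' hζ,
    WmWp.linearIndependent_fvec_and_span_eq_top hq hq' hζ⟩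
end
end
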